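/- arXiv:2602.23183 — 9 statements merged into one kernel-verified Lean document; each statement's English description precedes it below -/
import Mathlib

section
/- Let F be a finite simple graph that is acyclic (a forest) in which every vertex has degree at most Δ. Then every eigenvalue λ of the adjacency matrix of F satisfies |λ| ≤ 2√Δ. -/
set_option linter.unusedSectionVars false
open Matrix

namespace ForestAux
open SimpleGraph Finset

variable {V : Type*} [Fintype V] [DecidableEq V]

noncomputable def root (F : SimpleGraph V) (v : V) : V := (F.connectedComponentMk v).out

lemma reachable_root (F : SimpleGraph V) (v : V) : F.Reachable v (root F v) := by
  rw [← ConnectedComponent.eq]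
  exact (Quot.out_eq _).symm

lemma root_eq_of_adj (F : SimpleGraph V) {u v : V} (h : F.Adj u v) : root F u = root F v := by
  unfold root
  congr 1
  exact ConnectedComponent.eq.mpr h.reachable

variable {F : SimpleGraph V}

lemma dist_triangle' {u v w : V} (h1 : F.Reachable u v) (h2 : F.Reachable v w) :
    F.dist u w ≤ F.dist u v + F.dist v w := by
  obtain ⟨p, hp⟩ := h1.exists_walk_length_eq_dist
  obtain ⟨q, hq⟩ := h2.exists_walk_length_eq_dist
  rw [← hp, ← hq, ← Walk.length_append]
  apply dist_le

lemma dist_ne_of_adj (hac : F.IsAcyclic) {u v w : V} (h : F.Adj u v)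
    (hr : F.Reachable v w) : F.dist u w ≠ F.dist v w := by
  intro heq
  obtain ⟨p, hp, hlen⟩ := hr.exists_path_of_dist
  by_cases hu : u ∈ p.support
  · obtain ⟨q, q', rfl⟩ := Walk.mem_support_iff_exists_append.mp hu
    have h1 : F.dist u w ≤ q'.length := dist_le _
    have h2 : q.length ≠ 0 := fun h0 => h.ne (Walk.eq_of_length_eq_zero h0).symm
    rw [Walk.length_append] at hlen
    omega
  · have hp2 : (Walk.cons h p).IsPath := hp.cons hu
    obtain ⟨p', hp', hlen'⟩ := Reachable.exists_path_of_dist ⟨Walk.cons h p⟩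
    have heq2 := hac.path_unique ⟨Walk.cons h p, hp2⟩ ⟨p', hp'⟩
    have hl : (Walk.cons h p).length = p'.length := by
      rw [congrArg (fun q : F.Path u w => q.1.length) heq2]
    rw [Walk.length_cons] at hl
    omega

lemma closer_unique (hac : F.IsAcyclic) {v w u₁ u₂ : V}
    (h1 : F.Adj v u₁) (h2 : F.Adj v u₂)
    (hr1 : F.Reachable u₁ w) (hr2 : F.Reachable u₂ w)
    (hd1 : F.dist u₁ w + 1 = F.dist v w) (hd2 : F.dist u₂ w + 1 = F.dist v w) :
    u₁ = u₂ := by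
  obtain ⟨p₁, hp₁, hl₁⟩ := hr1.exists_path_of_dist
  obtain ⟨p₂, hp₂, hl₂⟩ := hr2.exists_path_of_dist
  have c₁ : (Walk.cons h1 p₁).IsPath := by
    apply Walk.isPath_of_length_eq_dist
    rw [Walk.length_cons]; omega
  have c₂ : (Walk.cons h2 p₂).IsPath := by
    apply Walk.isPath_of_length_eq_dist
    rw [Walk.length_cons]; omega
  have heq := hac.path_unique ⟨Walk.cons h1 p₁, c₁⟩ ⟨Walk.cons h2 p₂, c₂⟩
  have hsup := congrArg (fun q : F.Path v w => q.1.support) heq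
  simp only [Walk.support_cons] at hsup
  rw [p₁.support_eq_cons, p₂.support_eq_cons] at hsup
  simp only [List.cons.injEq] at hsup
  exact hsup.2.1

lemma exists_parent {v w : V} (hr : F.Reachable v w) (hne : v ≠ w) :
    ∃ u, F.Adj v u ∧ F.dist u w + 1 = F.dist v w := by
  obtain ⟨p, hp, hl⟩ := hr.exists_path_of_dist
  obtain ⟨u, h, q, rfl⟩ := Walk.exists_eq_cons_of_ne hne p
  refine ⟨u, h, ?_⟩
  have h1 : F.dist u w ≤ q.length := dist_le q
  obtain ⟨q', hq'⟩ := Reachable.exists_walk_length_eq_dist (⟨q⟩ : F.Reachable u w)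
  have h2 : F.dist v w ≤ (Walk.cons h q').length := dist_le _
  rw [Walk.length_cons] at h2
  rw [Walk.length_cons] at hl
  omega

lemma exists_parent_map (hac : F.IsAcyclic) :
    ∃ p : V → Option V,
      (∀ v u, p v = some u → F.Adj v u) ∧
      (∀ u v, F.Adj u v →
        ((p v = some u ∧ ¬ p u = some v) ∨ (p u = some v ∧ ¬ p v = some u))) := by
  classical
  let p : V → Option V := fun v =>
    if h : v = root F v then none
    else some (Classical.choose (exists_parent (reachable_root F v) h))
  have hspec : ∀ v (h : ¬ v = root F v),
      F.Adj v (Classical.choose (exists_parent (reachable_root F v) h)) ∧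
      F.dist (Classical.choose (exists_parent (reachable_root F v) h)) (root F v) + 1
        = F.dist v (root F v) :=
    fun v h => Classical.choose_spec (exists_parent (reachable_root F v) h)
  have hadj : ∀ v u, p v = some u → F.Adj v u := by
    intro v u hpv
    simp only [p] at hpv
    split at hpv
    · exact absurd hpv (by simp)
    · rename_i h
      rw [Option.some_inj] at hpv
      rw [← hpv]
      exact (hspec v h).1
  have hdist : ∀ v u, p v = some u → F.dist u (root F v) + 1 = F.dist v (root F v) := by
    intro v u hpv
    simp only [p] at hpv
    split at hpv
    · exact absurd hpv (by simp)
    · rename_i h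
      rw [Option.some_inj] at hpv
      rw [← hpv]
      exact (hspec v h).2
  -- key: if Adj u v and v is farther from the common root, then p v = some u
  have key : ∀ u v, F.Adj u v →
      F.dist v (root F v) = F.dist u (root F u) + 1 → p v = some u := by
    intro u v hadj' hd
    have hroot : root F u = root F v := root_eq_of_adj F hadj'
    have hvne : ¬ v = root F v := by
      intro h
      rw [← h] at hd
      simp [SimpleGraph.dist_self] at hd
    simp only [p, dif_neg hvne]
    rw [Option.some_inj]
    set u' := Classical.choose (exists_parent (reachable_root F v) hvne) with hu'
    obtain ⟨ha', hd'⟩ := hspec v hvne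
    refine closer_unique hac ha' hadj'.symm ?_ ?_ hd' ?_
    · exact ha'.symm.reachable.trans (reachable_root F v)
    · rw [← hroot]; exact reachable_root F u
    · rw [← hroot] at hd ⊢
      omega
  refine ⟨p, hadj, ?_⟩
  intro u v h
  have hroot : root F u = root F v := root_eq_of_adj F h
  have hru : F.Reachable u (root F u) := reachable_root F u
  have hrv : F.Reachable v (root F u) := by rw [hroot]; exact reachable_root F v
  have hne : F.dist u (root F u) ≠ F.dist v (root F u) := dist_ne_of_adj hac h hrv
  have hub1 : F.dist v (root F u) ≤ F.dist u (root F u) + 1 := by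
    calc F.dist v (root F u) ≤ F.dist v u + F.dist u (root F u) :=
          dist_triangle' h.symm.reachable hru
      _ ≤ F.dist u (root F u) + 1 := by
          rw [SimpleGraph.dist_eq_one_iff_adj.mpr h.symm]; omega
  have hub2 : F.dist u (root F u) ≤ F.dist v (root F u) + 1 := by
    calc F.dist u (root F u) ≤ F.dist u v + F.dist v (root F u) :=
          dist_triangle' h.reachable hrv
      _ ≤ F.dist v (root F u) + 1 := by
          rw [SimpleGraph.dist_eq_one_iff_adj.mpr h]; omega
  rcases lt_or_gt_of_ne hne with hlt | hgt
  · -- v is farther: p v = some u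
    left
    have hpv : p v = some u := key u v h (by rw [← hroot]; omega)
    refine ⟨hpv, ?_⟩
    intro hpu
    have := hdist u v hpu
    rw [hroot] at this
    rw [← hroot] at this
    omega
  · right
    have hpu : p u = some v := key v u h.symm (by rw [← hroot]; omega)
    refine ⟨hpu, ?_⟩
    intro hpv
    have := hdist v u hpv
    rw [← hroot] at this
    omega

end ForestAux

open ForestAux SimpleGraph Finset in
/-- every eigenvalue of the adjacency matrix of a forest (an acyclic simple
graph) of maximum degree at most `Δ` has absolute value at most `2√Δ`. -/
theorem abs_eigenvalue_le_of_forest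
    {V : Type*} [Fintype V] [DecidableEq V]
    (F : SimpleGraph V) [DecidableRel F.Adj]
    (hacyclic : F.IsAcyclic)
    (Δ : ℕ) (hdeg : ∀ v : V, F.degree v ≤ Δ)
    (μ : ℝ) (hμ : μ ∈ spectrum ℝ (F.adjMatrix ℝ)) :
    |μ| ≤ 2 * Real.sqrt Δ := by
  classical
  -- extract an eigenvector
  rw [spectrum.mem_iff] at hμ
  have hdet : (algebraMap ℝ (Matrix V V ℝ) μ - F.adjMatrix ℝ).det = 0 := by
    by_contra hd
    exact hμ ((Matrix.isUnit_iff_isUnit_det _).mpr (isUnit_iff_ne_zero.mpr hd))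
  obtain ⟨x, hx0, hx⟩ := (Matrix.exists_mulVec_eq_zero_iff).mpr hdet
  have hAx : (F.adjMatrix ℝ).mulVec x = μ • x := by
    rw [Matrix.sub_mulVec, Algebra.algebraMap_eq_smul_one, Matrix.smul_mulVec,
      Matrix.one_mulVec, sub_eq_zero] at hx
    exact hx.symm
  obtain ⟨v0, hv0⟩ : ∃ v, x v ≠ 0 := by
    by_contra hc
    push_neg at hc
    exact hx0 (funext hc)
  set E : ℝ := ∑ v, x v ^ 2 with hE
  have hEpos : 0 < E := by
    apply Finset.sum_pos' (fun v _ => sq_nonneg _)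
    exact ⟨v0, Finset.mem_univ _, by positivity⟩
  rcases Nat.eq_zero_or_pos Δ with hΔ | hΔ
  · -- no edges: μ = 0
    have hA : F.adjMatrix ℝ = 0 := by
      ext u v
      simp only [SimpleGraph.adjMatrix_apply, Matrix.zero_apply]
      rw [if_neg]
      intro hadj
      have : 0 < F.degree u := by
        rw [← SimpleGraph.card_neighborFinset_eq_degree]
        exact Finset.card_pos.mpr ⟨v, (SimpleGraph.mem_neighborFinset _ _ _).mpr hadj⟩
      have hdu := hdeg u
      omega
    have : μ = 0 := by
      have h0 : (0 : ℝ) = μ * x v0 := by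
        have := congrFun hAx v0
        rw [hA] at this
        simpa using this.symm
      rcases mul_eq_zero.mp h0.symm with h | h
      · exact h
      · exact absurd h hv0
    simp [this, Real.sqrt_nonneg]
  -- main case
  set s : ℝ := Real.sqrt Δ with hs
  have hspos : 0 < s := Real.sqrt_pos.mpr (by exact_mod_cast hΔ)
  have hs2 : s ^ 2 = Δ := Real.sq_sqrt (by positivity)
  obtain ⟨p, hp1, hp2⟩ := exists_parent_map hacyclic
  -- the quadratic form
  have hquad : μ * E = ∑ v, ∑ u, (if F.Adj v u then x v * x u else 0) := by
    calc μ * E = ∑ v, x v * ((μ • x) v) := by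
          rw [Finset.mul_sum]
          refine Finset.sum_congr rfl fun v _ => ?_
          simp only [Pi.smul_apply, smul_eq_mul]
          ring
      _ = ∑ v, x v * ((F.adjMatrix ℝ).mulVec x v) := by rw [hAx]
      _ = ∑ v, ∑ u, (if F.Adj v u then x v * x u else 0) := by
          refine Finset.sum_congr rfl fun v _ => ?_
          rw [Matrix.mulVec, dotProduct, Finset.mul_sum]
          refine Finset.sum_congr rfl fun u _ => ?_
          simp only [SimpleGraph.adjMatrix_apply]
          split <;> ring
  -- collapse option sums
  have hElim : ∀ (v : V) (f : V → ℝ),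
      (∑ u, if p v = some u then f u else 0) = (p v).elim 0 f := by
    intro v f
    cases hpv : p v with
    | none => simp [hpv]
    | some u₀ =>
        rw [Finset.sum_eq_single u₀]
        · simp [hpv]
        · intro u _ hu
          simp [hpv, Ne.symm hu]
        · intro h; exact absurd (Finset.mem_univ u₀) h
  set Q : V → ℝ := fun v => (p v).elim 0 (fun u => x v * x u) with hQdef
  have hsplit : (∑ v, ∑ u, (if F.Adj v u then x v * x u else 0)) = 2 * ∑ v, Q v := by
    have hterm : ∀ v u, (if F.Adj v u then x v * x u else 0)
        = (if p u = some v then x v * x u else 0) + (if p v = some u then x v * x u else 0) := by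
      intro v u
      by_cases h : F.Adj v u
      · rcases hp2 v u h with ⟨h1, h2⟩ | ⟨h1, h2⟩
        · rw [if_pos h, if_pos h1, if_neg h2]; ring
        · rw [if_pos h, if_pos h1, if_neg h2]; ring
      · rw [if_neg h, if_neg (fun hc => h ((hp1 u v hc).symm)),
          if_neg (fun hc => h (hp1 v u hc))]
        norm_num
    calc (∑ v, ∑ u, (if F.Adj v u then x v * x u else 0))
        = (∑ v, ∑ u, (if p u = some v then x v * x u else 0))
          + (∑ v, ∑ u, (if p v = some u then x v * x u else 0)) := by
          rw [← Finset.sum_add_distrib]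
          refine Finset.sum_congr rfl fun v _ => ?_
          rw [← Finset.sum_add_distrib]
          exact Finset.sum_congr rfl fun u _ => hterm v u
      _ = (∑ v, Q v) + (∑ v, Q v) := by
          congr 1
          · rw [Finset.sum_comm]
            refine Finset.sum_congr rfl fun u _ => ?_
            rw [show (∑ v, if p u = some v then x v * x u else 0)
                = ∑ v, if p u = some v then x u * x v else 0 from
                Finset.sum_congr rfl fun v _ => by split <;> ring]
            exact hElim u _
          · exact Finset.sum_congr rfl fun v _ => hElim v _
      _ = 2 * ∑ v, Q v := by ring
  -- bound ∑ |Q v|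
  set P : V → ℝ := fun v => (p v).elim 0 (fun u => x u ^ 2) with hPdef
  have hPsum : ∑ v, P v ≤ (Δ : ℝ) * E := by
    have h1 : ∀ v : V, P v = ∑ u, (if p v = some u then x u ^ 2 else 0) :=
      fun v => (hElim v _).symm
    calc ∑ v, P v = ∑ v, ∑ u, (if p v = some u then x u ^ 2 else 0) :=
          Finset.sum_congr rfl fun v _ => h1 v
      _ = ∑ u, ∑ v, (if p v = some u then x u ^ 2 else 0) := Finset.sum_comm
      _ ≤ ∑ u, (Δ : ℝ) * x u ^ 2 := by
          refine Finset.sum_le_sum fun u _ => ?_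
          rw [← Finset.sum_filter, Finset.sum_const, nsmul_eq_mul]
          have hcard : (Finset.univ.filter fun v => p v = some u).card ≤ Δ := by
            calc (Finset.univ.filter fun v => p v = some u).card
                ≤ (F.neighborFinset u).card := by
                  apply Finset.card_le_card
                  intro v hv
                  rw [Finset.mem_filter] at hv
                  rw [SimpleGraph.mem_neighborFinset]
                  exact (hp1 v u hv.2).symm
              _ = F.degree u := F.card_neighborFinset_eq_degree u
              _ ≤ Δ := hdeg u
          exact mul_le_mul_of_nonneg_right (by exact_mod_cast hcard) (sq_nonneg (x u))
      _ = (Δ : ℝ) * E := by rw [hE, Finset.mul_sum]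
  have hQbound : ∀ v, 2 * s * |Q v| ≤ P v + s ^ 2 * x v ^ 2 := by
    intro v
    cases hpv : p v with
    | none =>
        simp only [hQdef, hPdef, hpv, Option.elim]
        rw [abs_zero, mul_zero]
        positivity
    | some u =>
        simp only [hQdef, hPdef, hpv, Option.elim]
        rw [abs_mul]
        nlinarith [sq_nonneg (|x u| - s * |x v|), sq_abs (x u), sq_abs (x v),
          abs_nonneg (x u), abs_nonneg (x v),
          mul_nonneg (abs_nonneg (x v)) (abs_nonneg (x u)), hspos]
  have hT2 : 2 * s * ∑ v, |Q v| ≤ 2 * s ^ 2 * E := by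
    calc 2 * s * ∑ v, |Q v| = ∑ v, 2 * s * |Q v| := by rw [Finset.mul_sum]
      _ ≤ ∑ v, (P v + s ^ 2 * x v ^ 2) := Finset.sum_le_sum fun v _ => hQbound v
      _ = (∑ v, P v) + s ^ 2 * E := by
          rw [Finset.sum_add_distrib]
          congr 1
          rw [hE, Finset.mul_sum]
      _ ≤ (Δ : ℝ) * E + s ^ 2 * E := by linarith [hPsum]
      _ = 2 * s ^ 2 * E := by rw [hs2]; ring
  have hμE : |μ| * E ≤ 2 * ∑ v, |Q v| := by
    calc |μ| * E = |μ * E| := by rw [abs_mul, abs_of_pos hEpos]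
      _ = |2 * ∑ v, Q v| := by rw [hquad, hsplit]
      _ = 2 * |∑ v, Q v| := by rw [abs_mul, abs_two]
      _ ≤ 2 * ∑ v, |Q v| :=
          mul_le_mul_of_nonneg_left (Finset.abs_sum_le_sum_abs _ _) two_pos.le
  have hfin : s * (|μ| * E) ≤ 2 * s ^ 2 * E := by
    calc s * (|μ| * E) ≤ s * (2 * ∑ v, |Q v|) :=
          mul_le_mul_of_nonneg_left hμE hspos.le
      _ = 2 * s * ∑ v, |Q v| := by ring
      _ ≤ 2 * s ^ 2 * E := hT2
  rw [hs] at hfin hspos ⊢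
  nlinarith [hfin, mul_pos hspos hEpos, hspos, hEpos]
end

section
/- Let n ≥ 1 be a natural number, and let E and F be simple graphs on the same finite vertex set of cardinality at least 2 with disjoint edge sets, such that the adjacency matrix of E has spectral gap at least n/2 and F is a forest in which every vertex has degree at most 2n. Then the adjacency matrix of the graph G whose edge set is the union of the edge sets of E and F has spectral gap at least n/2 − 4√(2n). -/
open Matrix

/-- `Finset.univ.offDiag` is nonempty when the type has at least two elements. -/
lemma offDiag_nonempty_of_card {V : Type*} [Fintype V] [DecidableEq V]
    (h : 1 < Fintype.card V) : ((Finset.univ : Finset V)).offDiag.Nonempty := by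
  obtain ⟨a, b, hab⟩ := Fintype.exists_pair_of_one_lt_card h
  exact ⟨(a, b), Finset.mem_offDiag.2 ⟨Finset.mem_univ _, Finset.mem_univ _, hab⟩⟩

/-- The spectral gap of a real symmetric matrix indexed by a finite type with at least
two elements: the difference between the largest eigenvalue and the second-largest
eigenvalue counted with multiplicity. -/
noncomputable def spectralGap {V : Type*} [Fintype V] [DecidableEq V]
    {A : Matrix V V ℝ} (hA : A.IsHermitian)
    (h : ((Finset.univ : Finset V)).offDiag.Nonempty) : ℝ :=
  Finset.univ.sup' ⟨h.choose.1, Finset.mem_univ _⟩ hA.eigenvalues -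
    (Finset.univ : Finset V).offDiag.sup' h
      (fun p => min (hA.eigenvalues p.1) (hA.eigenvalues p.2))

/-- The adjacency matrix of a simple graph is a real symmetric (Hermitian) matrix. -/
lemma adjMatrix_isHermitian {V : Type*} [Fintype V] (G : SimpleGraph V)
    [DecidableRel G.Adj] : (G.adjMatrix ℝ).IsHermitian := by
  show (G.adjMatrix ℝ)ᴴ = G.adjMatrix ℝ
  ext i j
  simp [Matrix.conjTranspose_apply, SimpleGraph.adj_comm]

set_option linter.unusedSectionVars false
set_option maxHeartbeats 1600000

section SpectralHelpers
variable {V : Type*} [Fintype V] [DecidableEq V] {A : Matrix V V ℝ} (hA : A.IsHermitian)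

lemma dot_eq_inner (x y : V → ℝ) : x ⬝ᵥ y = (inner (𝕜 := ℝ) (E := EuclideanSpace ℝ V) (WithLp.toLp 2 x) (WithLp.toLp 2 y)) := by
  simp [PiLp.inner_apply, dotProduct, mul_comm]

lemma hermitian_transpose_eq (hA : A.IsHermitian) : Aᵀ = A := by
  have h := hA; unfold Matrix.IsHermitian at h
  calc Aᵀ = Aᴴ := by ext i j; simp [Matrix.conjTranspose_apply]
  _ = A := h

lemma eigen_dot (x : V → ℝ) (i : V) :
    (hA.eigenvectorBasis i : V → ℝ) ⬝ᵥ (A *ᵥ x) = hA.eigenvalues i * ((hA.eigenvectorBasis i : V → ℝ) ⬝ᵥ x) := by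
  rw [Matrix.dotProduct_mulVec]
  have h1 : (hA.eigenvectorBasis i : V → ℝ) ᵥ* A = A *ᵥ (hA.eigenvectorBasis i : V → ℝ) := by
    rw [← Matrix.mulVec_transpose, hermitian_transpose_eq hA]
  rw [h1]
  rw [show A *ᵥ (hA.eigenvectorBasis i : V → ℝ) = hA.eigenvalues i • (hA.eigenvectorBasis i : V → ℝ) from hA.mulVec_eigenvectorBasis i]
  rw [smul_dotProduct, smul_eq_mul]

lemma parseval_dot (x y : V → ℝ) :
    x ⬝ᵥ y = ∑ i, ((hA.eigenvectorBasis i : V → ℝ) ⬝ᵥ x) * ((hA.eigenvectorBasis i : V → ℝ) ⬝ᵥ y) := by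
  rw [dot_eq_inner, ← OrthonormalBasis.sum_inner_mul_inner hA.eigenvectorBasis]
  congr 1; ext i
  rw [dot_eq_inner, dot_eq_inner, WithLp.toLp_ofLp, real_inner_comm]

lemma quad_decomp (x : V → ℝ) :
    x ⬝ᵥ (A *ᵥ x) = ∑ i, hA.eigenvalues i * ((hA.eigenvectorBasis i : V → ℝ) ⬝ᵥ x)^2 := by
  rw [parseval_dot hA x (A *ᵥ x)]
  congr 1; ext i
  rw [eigen_dot hA x i]; ring

lemma norm_decomp (x : V → ℝ) :
    x ⬝ᵥ x = ∑ i, ((hA.eigenvectorBasis i : V → ℝ) ⬝ᵥ x)^2 := by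
  rw [parseval_dot hA x x]
  congr 1; ext i; ring

lemma basis_dot_ite (i j : V) :
    (hA.eigenvectorBasis i : V → ℝ) ⬝ᵥ (hA.eigenvectorBasis j : V → ℝ) = if i = j then 1 else 0 := by
  have h := hA.eigenvectorBasis.orthonormal
  rw [orthonormal_iff_ite] at h
  rw [dot_eq_inner]; exact h i j

-- Rayleigh upper bound
lemma rayleigh_le (ne : (Finset.univ : Finset V).Nonempty) (x : V → ℝ) :
    x ⬝ᵥ (A *ᵥ x) ≤ (Finset.univ.sup' ne hA.eigenvalues) * (x ⬝ᵥ x) := by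
  rw [quad_decomp hA x, norm_decomp hA x, Finset.mul_sum]
  apply Finset.sum_le_sum
  intro i _
  have h1 : hA.eigenvalues i ≤ Finset.univ.sup' ne hA.eigenvalues :=
    Finset.le_sup' _ (Finset.mem_univ i)
  nlinarith [sq_nonneg ((hA.eigenvectorBasis i : V → ℝ) ⬝ᵥ x)]

-- eigenvector attains
lemma eigen_attains (i : V) :
    (hA.eigenvectorBasis i : V → ℝ) ⬝ᵥ (A *ᵥ (hA.eigenvectorBasis i : V → ℝ)) = hA.eigenvalues i := by
  rw [eigen_dot, basis_dot_ite]; simp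

lemma erase_univ_nonempty_of_card (hcard : 1 < Fintype.card V) (a : V) :
    ((Finset.univ : Finset V).erase a).Nonempty := by
  rw [← Finset.card_pos, Finset.card_erase_of_mem (Finset.mem_univ a)]
  simp [Finset.card_univ]; omega

lemma second_eq (h : ((Finset.univ : Finset V)).offDiag.Nonempty)
    (f : V → ℝ) (a0 : V) (h' : ((Finset.univ : Finset V).erase a0).Nonempty)
    (ha0 : ∀ j, f j ≤ f a0) :
    (Finset.univ : Finset V).offDiag.sup' h (fun p => min (f p.1) (f p.2)) =
      ((Finset.univ : Finset V).erase a0).sup' h' f := by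
  apply le_antisymm
  · apply Finset.sup'_le
    intro p hp
    obtain ⟨-, -, hne⟩ := Finset.mem_offDiag.1 hp
    rcases eq_or_ne p.1 a0 with h1 | h1
    · have h2 : p.2 ≠ a0 := fun hh => hne (h1.trans hh.symm)
      exact le_trans (min_le_right _ _)
        (Finset.le_sup' f (Finset.mem_erase.2 ⟨h2, Finset.mem_univ _⟩))
    · exact le_trans (min_le_left _ _)
        (Finset.le_sup' f (Finset.mem_erase.2 ⟨h1, Finset.mem_univ _⟩))
  · apply Finset.sup'_le
    intro j hj
    have hja : j ≠ a0 := (Finset.mem_erase.1 hj).1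
    have hmin : f j = min (f a0) (f j) := (min_eq_right (ha0 j)).symm
    rw [hmin]
    exact Finset.le_sup' (fun p : V × V => min (f p.1) (f p.2))
      (show (a0, j) ∈ _ from
        Finset.mem_offDiag.2 ⟨Finset.mem_univ _, Finset.mem_univ _, fun hh => hja hh.symm⟩)

end SpectralHelpers

section ForestHelpers
open SimpleGraph

noncomputable def fr {V : Type*} (F : SimpleGraph V) (v : V) : V :=
  Quot.out (F.connectedComponentMk v)

lemma fr_mk {V : Type*} (F : SimpleGraph V) (v : V) :
    F.connectedComponentMk (fr F v) = F.connectedComponentMk v := Quot.out_eq _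

lemma fr_reach {V : Type*} (F : SimpleGraph V) (v : V) : F.Reachable v (fr F v) :=
  (ConnectedComponent.exact (fr_mk F v)).symm

lemma fr_adj {V : Type*} {F : SimpleGraph V} {u v : V} (h : F.Adj u v) : fr F u = fr F v := by
  unfold fr
  rw [ConnectedComponent.connectedComponentMk_eq_of_adj h]

noncomputable def rp {V : Type*} [DecidableEq V] (F : SimpleGraph V) (v : V) : F.Path v (fr F v) :=
  (fr_reach F v).some.toPath

noncomputable def pfn {V : Type*} [DecidableEq V] (F : SimpleGraph V) (v : V) : Option V :=
  @ite _ (F.Adj v ((rp F v).1.getVert 1)) (Classical.dec _) (some ((rp F v).1.getVert 1)) none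

lemma pfn_adj {V : Type*} [DecidableEq V] {F : SimpleGraph V} {u w : V} (h : pfn F u = some w) : F.Adj u w := by
  classical
  unfold pfn at h
  split at h
  · rename_i hh
    rw [Option.some.injEq] at h
    rwa [← h]
  · simp at h

lemma pfn_cover {V : Type*} [DecidableEq V] {F : SimpleGraph V} (hF : F.IsAcyclic) {u v : V} (h : F.Adj u v) :
    pfn F u = some v ∨ pfn F v = some u := by
  classical
  by_cases hv : v ∈ (rp F u).1.support
  · left
    have htp : ((rp F u).1.takeUntil v hv).IsPath := (rp F u).2.takeUntil hv
    have huniq : (⟨(rp F u).1.takeUntil v hv, htp⟩ : F.Path u v) = Path.singleton h :=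
      hF.path_unique _ _
    have heq : (rp F u).1.takeUntil v hv = Walk.cons h Walk.nil := congrArg Subtype.val huniq
    have hcons : (rp F u).1 = Walk.cons h ((rp F u).1.dropUntil v hv) := by
      conv_lhs => rw [← Walk.take_spec (rp F u).1 hv]
      rw [heq]
      rfl
    have hg : (rp F u).1.getVert 1 = v := by
      rw [hcons, Walk.getVert_cons_succ, Walk.getVert_zero]
    rw [pfn]
    simp only [hg]
    simp [h]
  · right
    have hfr : fr F u = fr F v := fr_adj h
    have hp2 : (Walk.cons h.symm (rp F u).1).IsPath := (rp F u).2.cons hv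
    have hW : ((Walk.cons h.symm (rp F u).1).copy rfl hfr).IsPath := by
      rwa [Walk.isPath_copy]
    have huniq : rp F v = ⟨(Walk.cons h.symm (rp F u).1).copy rfl hfr, hW⟩ :=
      hF.path_unique _ _
    have hg : (rp F v).1.getVert 1 = u := by
      rw [huniq]
      simp only [Walk.getVert_copy, Walk.getVert_cons_succ, Walk.getVert_zero]
    rw [pfn]
    simp only [hg]
    simp [h.symm]


lemma forest_quad {V : Type*} [Fintype V] [DecidableEq V] (F : SimpleGraph V)
    [DecidableRel F.Adj] (hF : F.IsAcyclic) (n : ℕ) (hn : 1 ≤ n)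
    (hdeg : ∀ v : V, F.degree v ≤ 2 * n) (x : V → ℝ) :
    |x ⬝ᵥ (F.adjMatrix ℝ *ᵥ x)| ≤ (2 * Real.sqrt (2 * n)) * (x ⬝ᵥ x) := by
  classical
  set s := Real.sqrt (2 * n) with hsdef
  have hn' : (0:ℝ) < 2 * n := by positivity
  have hs : 0 < s := Real.sqrt_pos.2 hn'
  have hs2 : s ^ 2 = 2 * n := Real.sq_sqrt hn'.le
  set g : V → ℝ := fun u => (pfn F u).elim 0 (fun w => |x u| * |x w|) with hg
  set h : V → ℝ := fun u => (pfn F u).elim 0 (fun w => (x w) ^ 2) with hh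
  have hgnn : ∀ u, 0 ≤ g u := by
    intro u
    rw [hg]
    cases hpu : pfn F u with
    | none => simp [hpu]
    | some w =>
      simp only [hpu, Option.elim_some]
      positivity
  -- expand quadratic form
  have hexp : x ⬝ᵥ (F.adjMatrix ℝ *ᵥ x) =
      ∑ u, ∑ v, (if F.Adj u v then x u * x v else 0) := by
    simp only [dotProduct, Matrix.mulVec, dotProduct, SimpleGraph.adjMatrix_apply,
      Finset.mul_sum, ite_mul, one_mul, zero_mul, mul_ite, mul_zero]
  have habs : |x ⬝ᵥ (F.adjMatrix ℝ *ᵥ x)| ≤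
      ∑ u, ∑ v, (if F.Adj u v then |x u| * |x v| else 0) := by
    rw [hexp]
    refine (Finset.abs_sum_le_sum_abs _ _).trans ?_
    apply Finset.sum_le_sum
    intro u _
    refine (Finset.abs_sum_le_sum_abs _ _).trans ?_
    apply Finset.sum_le_sum
    intro v _
    rw [apply_ite abs, abs_zero, abs_mul]
  have hcollapse : ∀ (f : V → ℝ) (u : V),
      (∑ v, if pfn F u = some v then f v else 0) = (pfn F u).elim 0 f := by
    intro f u
    cases hpu : pfn F u with
    | none => simp [hpu]
    | some w => simp [hpu]
  have hT : (∑ u, ∑ v, (if F.Adj u v then |x u| * |x v| else 0)) ≤ 2 * ∑ u, g u := by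
    have hsplit : ∀ u v : V, (if F.Adj u v then |x u| * |x v| else 0) ≤
        (if pfn F u = some v then |x u| * |x v| else 0) +
        (if pfn F v = some u then |x u| * |x v| else 0) := by
      intro u v
      by_cases hadj : F.Adj u v
      · rcases pfn_cover hF hadj with hc | hc
        · simp only [hadj, if_true, hc]
          have : (0:ℝ) ≤ if pfn F v = some u then |x u| * |x v| else 0 := by
            split <;> positivity
          linarith
        · simp only [hadj, if_true, hc]
          have : (0:ℝ) ≤ if pfn F u = some v then |x u| * |x v| else 0 := by
            split <;> positivity
          linarith
      · simp only [hadj, if_false]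
        have h1 : (0:ℝ) ≤ if pfn F u = some v then |x u| * |x v| else 0 := by
          split <;> positivity
        have h2 : (0:ℝ) ≤ if pfn F v = some u then |x u| * |x v| else 0 := by
          split <;> positivity
        linarith
    calc (∑ u, ∑ v, (if F.Adj u v then |x u| * |x v| else 0))
        ≤ ∑ u, ∑ v, ((if pfn F u = some v then |x u| * |x v| else 0) +
            (if pfn F v = some u then |x u| * |x v| else 0)) := by
          apply Finset.sum_le_sum; intro u _
          apply Finset.sum_le_sum; intro v _
          exact hsplit u v
      _ = (∑ u, ∑ v, (if pfn F u = some v then |x u| * |x v| else 0)) +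
          (∑ u, ∑ v, (if pfn F v = some u then |x u| * |x v| else 0)) := by
          rw [← Finset.sum_add_distrib]
          congr 1; ext u
          rw [← Finset.sum_add_distrib]
      _ = (∑ u, g u) + (∑ v, g v) := by
          congr 1
          · apply Finset.sum_congr rfl
            intro u _
            exact hcollapse (fun w => |x u| * |x w|) u
          · rw [Finset.sum_comm]
            apply Finset.sum_congr rfl
            intro v _
            rw [show (∑ u, if pfn F v = some u then |x u| * |x v| else 0)
                = ∑ u, if pfn F v = some u then |x v| * |x u| else 0 by
              apply Finset.sum_congr rfl; intro u _; rw [mul_comm (|x u|)]]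
            exact hcollapse (fun w => |x v| * |x w|) v
      _ = 2 * ∑ u, g u := by ring
  have hkey : ∀ u, 2 * s * g u ≤ s ^ 2 * (x u) ^ 2 + h u := by
    intro u
    rw [hg, hh]
    cases hpu : pfn F u with
    | none =>
      simp only [hpu, Option.elim_none, mul_zero, add_zero]
      positivity
    | some w =>
      simp only [hpu, Option.elim_some]
      nlinarith [sq_nonneg (s * |x u| - |x w|), sq_abs (x u), sq_abs (x w)]
  have hsumh : ∑ u, h u ≤ (2 * n) * ∑ v, (x v) ^ 2 := by
    have e1 : ∑ u, h u = ∑ u, ∑ v, (if pfn F u = some v then (x v) ^ 2 else 0) := by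
      apply Finset.sum_congr rfl
      intro u _
      exact (hcollapse (fun w => (x w) ^ 2) u).symm
    rw [e1, Finset.sum_comm, Finset.mul_sum]
    apply Finset.sum_le_sum
    intro v _
    have e2 : (∑ u, if pfn F u = some v then (x v) ^ 2 else 0)
        = ((Finset.univ.filter (fun u => pfn F u = some v)).card : ℝ) * (x v) ^ 2 := by
      rw [← Finset.sum_filter, Finset.sum_const, nsmul_eq_mul]
    rw [e2]
    have hsub : Finset.univ.filter (fun u => pfn F u = some v) ⊆ F.neighborFinset v := by
      intro u hu
      exact (SimpleGraph.mem_neighborFinset _ _ _).2 (pfn_adj (Finset.mem_filter.1 hu).2).symm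
    have hcard : ((Finset.univ.filter (fun u => pfn F u = some v)).card : ℝ) ≤ 2 * n := by
      have := (Finset.card_le_card hsub).trans (hdeg v)
      exact_mod_cast this
    nlinarith [sq_nonneg (x v), hcard]
  have hxx : x ⬝ᵥ x = ∑ v, (x v) ^ 2 := by
    simp [dotProduct, sq]
  have hsumg : ∑ u, g u ≤ s * ∑ v, (x v) ^ 2 := by
    have h1 : 2 * s * ∑ u, g u ≤ s ^ 2 * (∑ v, (x v) ^ 2) + ∑ u, h u := by
      calc 2 * s * ∑ u, g u = ∑ u, 2 * s * g u := by rw [Finset.mul_sum]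
        _ ≤ ∑ u, (s ^ 2 * (x u) ^ 2 + h u) := Finset.sum_le_sum (fun u _ => hkey u)
        _ = s ^ 2 * (∑ v, (x v) ^ 2) + ∑ u, h u := by
            rw [Finset.sum_add_distrib, Finset.mul_sum]
    have h2 : 2 * s * ∑ u, g u ≤ 2 * s ^ 2 * ∑ v, (x v) ^ 2 := by
      rw [hs2] at h1 ⊢
      linarith [hsumh]
    have h3 : 2 * s * ∑ u, g u ≤ 2 * s * (s * ∑ v, (x v) ^ 2) := by
      calc 2 * s * ∑ u, g u ≤ 2 * s ^ 2 * ∑ v, (x v) ^ 2 := h2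
        _ = 2 * s * (s * ∑ v, (x v) ^ 2) := by ring
    exact le_of_mul_le_mul_left h3 (by positivity)
  calc |x ⬝ᵥ (F.adjMatrix ℝ *ᵥ x)| ≤ ∑ u, ∑ v, (if F.Adj u v then |x u| * |x v| else 0) := habs
    _ ≤ 2 * ∑ u, g u := hT
    _ ≤ 2 * (s * ∑ v, (x v) ^ 2) := by linarith [hsumg]
    _ = (2 * s) * (x ⬝ᵥ x) := by rw [hxx]; ring

lemma gap_perturb {V : Type*} [Fintype V] [DecidableEq V] (hcard : 1 < Fintype.card V) {A D M : Matrix V V ℝ}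
    (hA : A.IsHermitian) (hM : M.IsHermitian) (hMdef : M = A + D) (c : ℝ) (hc : 0 ≤ c)
    (hD : ∀ x : V → ℝ, |x ⬝ᵥ (D *ᵥ x)| ≤ c * (x ⬝ᵥ x)) :
    spectralGap hA (offDiag_nonempty_of_card hcard) - 2 * c ≤
      spectralGap hM (offDiag_nonempty_of_card hcard) := by
  rw [spectralGap, spectralGap]
  set μ := hA.eigenvalues with hμ
  set ν := hM.eigenvalues with hν
  set neU : (Finset.univ : Finset V).Nonempty :=
    ⟨(offDiag_nonempty_of_card hcard).choose.1, Finset.mem_univ _⟩ with hneU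
  obtain ⟨a0, -, hA0⟩ := Finset.exists_mem_eq_sup' neU μ
  obtain ⟨i0, -, hI0⟩ := Finset.exists_mem_eq_sup' neU ν
  have ha0max : ∀ j, μ j ≤ μ a0 := fun j => hA0 ▸ Finset.le_sup' μ (Finset.mem_univ j)
  have hi0max : ∀ j, ν j ≤ ν i0 := fun j => hI0 ▸ Finset.le_sup' ν (Finset.mem_univ j)
  have hea : ((Finset.univ : Finset V).erase a0).Nonempty := erase_univ_nonempty_of_card hcard a0
  have hei : ((Finset.univ : Finset V).erase i0).Nonempty := erase_univ_nonempty_of_card hcard i0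
  obtain ⟨j0, hj0mem, hJ0⟩ := Finset.exists_mem_eq_sup' hei ν
  have hij : j0 ≠ i0 := (Finset.mem_erase.1 hj0mem).1
  set sA := ((Finset.univ : Finset V).erase a0).sup' hea μ with hsA
  rw [second_eq _ μ a0 hea ha0max, second_eq _ ν i0 hei hi0max, hJ0]
  -- the vectors
  set u : V → ℝ := (hA.eigenvectorBasis a0 : V → ℝ) with hu
  set w1 : V → ℝ := (hM.eigenvectorBasis i0 : V → ℝ) with hw1
  set w2 : V → ℝ := (hM.eigenvectorBasis j0 : V → ℝ) with hw2
  -- Step 1: lower bound on top eigenvalue of M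
  have huu : u ⬝ᵥ u = 1 := by rw [hu, basis_dot_ite]; simp
  have step1 : μ a0 - c ≤ Finset.univ.sup' neU ν := by
    have h1 : u ⬝ᵥ (M *ᵥ u) ≤ (Finset.univ.sup' neU ν) * (u ⬝ᵥ u) := rayleigh_le hM neU u
    have h2 : u ⬝ᵥ (M *ᵥ u) = μ a0 + u ⬝ᵥ (D *ᵥ u) := by
      rw [hMdef, Matrix.add_mulVec, dotProduct_add, hu, eigen_attains]
    have h3 := abs_le.1 (hD u)
    rw [huu, mul_one] at h1
    rw [huu] at h3
    rw [h2] at h1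
    linarith [h3.1]
  -- Step 2: upper bound on second eigenvalue of M
  have main : ∀ α β : ℝ, α * (u ⬝ᵥ w1) + β * (u ⬝ᵥ w2) = 0 → 0 < α ^ 2 + β ^ 2 →
      ν j0 ≤ sA + c := by
    intro α β hperp hpos
    set x : V → ℝ := α • w1 + β • w2 with hx
    have hux : u ⬝ᵥ x = 0 := by
      rw [hx, dotProduct_add, dotProduct_smul, dotProduct_smul,
        smul_eq_mul, smul_eq_mul]
      exact hperp
    have hw11 : w1 ⬝ᵥ w1 = 1 := by rw [hw1, basis_dot_ite]; simp
    have hw22 : w2 ⬝ᵥ w2 = 1 := by rw [hw2, basis_dot_ite]; simp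
    have hw12 : w1 ⬝ᵥ w2 = 0 := by rw [hw1, hw2, basis_dot_ite]; simp [hij.symm]
    have hw21 : w2 ⬝ᵥ w1 = 0 := by rw [hw1, hw2, basis_dot_ite]; simp [hij]
    have hxx : x ⬝ᵥ x = α ^ 2 + β ^ 2 := by
      rw [hx]
      simp only [dotProduct_add, add_dotProduct, dotProduct_smul,
        smul_dotProduct, smul_eq_mul, hw11, hw22, hw12, hw21]
      ring
    have hMve1 : M *ᵥ w1 = ν i0 • w1 := hM.mulVec_eigenvectorBasis i0
    have hMve2 : M *ᵥ w2 = ν j0 • w2 := hM.mulVec_eigenvectorBasis j0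
    have hMx : x ⬝ᵥ (M *ᵥ x) = α ^ 2 * ν i0 + β ^ 2 * ν j0 := by
      rw [hx, Matrix.mulVec_add, Matrix.mulVec_smul, Matrix.mulVec_smul, hMve1, hMve2]
      simp only [dotProduct_add, add_dotProduct, dotProduct_smul,
        smul_dotProduct, smul_eq_mul, hw11, hw22, hw12, hw21]
      ring
    have hAx : x ⬝ᵥ (A *ᵥ x) ≤ sA * (x ⬝ᵥ x) := by
      rw [quad_decomp hA, norm_decomp hA, Finset.mul_sum]
      apply Finset.sum_le_sum
      intro i _
      rcases eq_or_ne i a0 with rfl | hi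
      · rw [← hu, hux]
        simp
      · have h1 : μ i ≤ sA :=
          Finset.le_sup' μ (Finset.mem_erase.2 ⟨hi, Finset.mem_univ _⟩)
        nlinarith [sq_nonneg ((hA.eigenvectorBasis i : V → ℝ) ⬝ᵥ x)]
    have hDx := abs_le.1 (hD x)
    have hsplit : x ⬝ᵥ (M *ᵥ x) = x ⬝ᵥ (A *ᵥ x) + x ⬝ᵥ (D *ᵥ x) := by
      rw [hMdef, Matrix.add_mulVec, dotProduct_add]
    have hνj : ν j0 ≤ ν i0 := hi0max j0
    have hchain : ν j0 * (α ^ 2 + β ^ 2) ≤ (sA + c) * (α ^ 2 + β ^ 2) := by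
      have l1 : ν j0 * (α ^ 2 + β ^ 2) ≤ x ⬝ᵥ (M *ᵥ x) := by
        rw [hMx]; nlinarith [sq_nonneg α]
      have l2 : x ⬝ᵥ (M *ᵥ x) ≤ (sA + c) * (α ^ 2 + β ^ 2) := by
        rw [hsplit]
        have h4 := hDx.2
        rw [hxx] at h4 hAx
        linarith
      linarith
    exact le_of_mul_le_mul_right (by linarith [hchain]) hpos
  have step2 : ν j0 ≤ sA + c := by
    by_cases hz : u ⬝ᵥ w2 = 0 ∧ u ⬝ᵥ w1 = 0
    · exact main 1 0 (by rw [hz.2]; ring) (by norm_num)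
    · refine main (u ⬝ᵥ w2) (-(u ⬝ᵥ w1)) (by ring) ?_
      rcases not_and_or.1 hz with h | h
      · have h2 : 0 < (u ⬝ᵥ w2) ^ 2 := sq_pos_iff.2 h
        nlinarith [sq_nonneg (-(u ⬝ᵥ w1))]
      · have h2 : 0 < (u ⬝ᵥ w1) ^ 2 := sq_pos_iff.2 h
        nlinarith [sq_nonneg (u ⬝ᵥ w2)]
  rw [hA0]
  linarith [step1, step2]


lemma adjMatrix_sup_eq {V : Type*} [Fintype V] [DecidableEq V]
    (E F : SimpleGraph V) [DecidableRel E.Adj] [DecidableRel F.Adj]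
    [DecidableRel (E ⊔ F).Adj] (hdisj : Disjoint E.edgeSet F.edgeSet) :
    (E ⊔ F).adjMatrix ℝ = E.adjMatrix ℝ + F.adjMatrix ℝ := by
  ext u v
  simp only [SimpleGraph.adjMatrix_apply, Matrix.add_apply, SimpleGraph.sup_adj]
  by_cases hE : E.Adj u v
  · have hF : ¬ F.Adj u v := fun hF =>
      (Set.disjoint_left.1 hdisj (E.mem_edgeSet.2 hE)) (F.mem_edgeSet.2 hF)
    simp [hE, hF]
  · by_cases hF : F.Adj u v <;> simp [hE, hF]

end ForestHelpers

/-- if `E` has adjacency spectral gap at least `n/2` and `F` is an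
edge-disjoint forest of maximum degree at most `2n` on the same vertex set, then the
graph union `E ⊔ F` has adjacency spectral gap at least `n/2 - 4√(2n)`. -/
theorem spectralGap_union_expander_forest
    {V : Type*} [Fintype V] [DecidableEq V] (hcard : 1 < Fintype.card V)
    (n : ℕ) (hn : 1 ≤ n)
    (E F : SimpleGraph V) [DecidableRel E.Adj] [DecidableRel F.Adj]
    [DecidableRel (E ⊔ F).Adj]
    (hdisj : Disjoint E.edgeSet F.edgeSet)
    (hgapE : (n : ℝ) / 2 ≤ spectralGap (adjMatrix_isHermitian E)
      (offDiag_nonempty_of_card hcard))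
    (hforest : F.IsAcyclic)
    (hdeg : ∀ v : V, F.degree v ≤ 2 * n) :
    (n : ℝ) / 2 - 4 * Real.sqrt (2 * n) ≤
      spectralGap (adjMatrix_isHermitian (E ⊔ F)) (offDiag_nonempty_of_card hcard) := by
  have hMdef : (E ⊔ F).adjMatrix ℝ = E.adjMatrix ℝ + F.adjMatrix ℝ :=
    adjMatrix_sup_eq E F hdisj
  have hc : (0:ℝ) ≤ 2 * Real.sqrt (2 * n) := by positivity
  have hpert := gap_perturb hcard (adjMatrix_isHermitian E)
    (adjMatrix_isHermitian (E ⊔ F)) hMdef (2 * Real.sqrt (2 * n)) hc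
    (fun x => forest_quad F hforest n hn hdeg x)
  linarith
end

section
/- Let T be a finite tree (a connected acyclic simple graph on a finite nonempty vertex set) with adjacency matrix A and a distinguished vertex t, and let λ_T be the largest eigenvalue of A. Fix a real number λ > λ_T. Then λI − A is invertible, the diagonal entry c := [(λI − A)⁻¹]_{t,t} is strictly positive, and, setting α := 1/c, the vector ψ := α·(λI − A)⁻¹ e_t has all entries strictly positive, satisfies ψ(t) = 1, satisfies the eigenvalue equation (A + α·e_t e_tᵀ)·ψ = λ·ψ, and λ is the largest eigenvalue of the matrix A + α·e_t e_tᵀ. -/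
open Matrix


lemma quad_pos' {V : Type*} [Fintype V] [DecidableEq V]
    (A : Matrix V V ℝ) (hAH : A.IsHermitian) (lam : ℝ)
    (hlam : ∀ i, hAH.eigenvalues i < lam)
    (x : V → ℝ) (hx : x ≠ 0) :
    0 < x ⬝ᵥ ((lam • (1 : Matrix V V ℝ) - A) *ᵥ x) := by
  set U : Matrix V V ℝ := (hAH.eigenvectorUnitary : Matrix V V ℝ) with hU
  have hstar : star U = Uᵀ := by
    rw [Matrix.star_eq_conjTranspose, Matrix.conjTranspose_eq_transpose_of_trivial]
  have hUs : U * Uᵀ = 1 := by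
    rw [← hstar]; exact (Matrix.mem_unitaryGroup_iff).mp hAH.eigenvectorUnitary.2
  set y : V → ℝ := Uᵀ *ᵥ x with hy
  have hyx : U *ᵥ y = x := by
    rw [hy, mulVec_mulVec, hUs, one_mulVec]
  have hyne : y ≠ 0 := by
    intro h
    apply hx
    rw [← hyx, h, mulVec_zero]
  have hxy : x ⬝ᵥ x = y ⬝ᵥ y := by
    conv_rhs => rw [hy, mulVec_transpose, ← dotProduct_mulVec, ← mulVec_transpose,
      mulVec_mulVec, hUs, one_mulVec]
  have hAq : x ⬝ᵥ (A *ᵥ x) = ∑ i, hAH.eigenvalues i * (y i)^2 := by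
    conv_lhs => rw [hAH.spectral_theorem, Unitary.conjStarAlgAut_apply, ← hU, hstar,
      ← Matrix.mulVec_mulVec, ← Matrix.mulVec_mulVec, dotProduct_mulVec, ← mulVec_transpose, ← hy]
    simp only [RCLike.ofReal_real_eq_id, Function.comp_def, id]
    simp [dotProduct, mulVec_diagonal, pow_two, mul_comm, mul_assoc, mul_left_comm]
  have hexp : x ⬝ᵥ ((lam • (1 : Matrix V V ℝ) - A) *ᵥ x)
      = ∑ i, (lam - hAH.eigenvalues i) * (y i)^2 := by
    rw [sub_mulVec, dotProduct_sub, smul_mulVec, one_mulVec, dotProduct_smul, hAq, hxy]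
    rw [smul_eq_mul, dotProduct, Finset.mul_sum, ← Finset.sum_sub_distrib]
    exact Finset.sum_congr rfl fun i _ => by ring
  rw [hexp]
  obtain ⟨i0, hi0⟩ : ∃ i, y i ≠ 0 := by
    by_contra h
    push_neg at h
    exact hyne (funext h)
  apply Finset.sum_pos'
  · intro i _
    have h1 := (hlam i)
    have h2 : (0:ℝ) ≤ (y i)^2 := sq_nonneg _
    nlinarith
  · refine ⟨i0, Finset.mem_univ _, ?_⟩
    have h1 := hlam i0
    have h2 : 0 < (y i0)^2 := pow_pos (abs_pos.mpr hi0) 2 |>.trans_eq (by rw [sq_abs]) |>.trans_le le_rfl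
    nlinarith


lemma nonneg_sol' {V : Type*} [Fintype V] [DecidableEq V]
    (A : Matrix V V ℝ) (hA0 : ∀ u v, 0 ≤ A u v) (lam : ℝ)
    (hq : ∀ z : V → ℝ, z ≠ 0 → 0 < z ⬝ᵥ ((lam • (1 : Matrix V V ℝ) - A) *ᵥ z))
    (x b : V → ℝ) (hb : ∀ v, 0 ≤ b v)
    (hx : (lam • (1 : Matrix V V ℝ) - A) *ᵥ x = b) (v : V) : 0 ≤ x v := by
  by_contra hv
  push_neg at hv
  set M : Matrix V V ℝ := lam • (1 : Matrix V V ℝ) - A with hM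
  set n : V → ℝ := fun u => max (-x u) 0 with hn
  set p : V → ℝ := fun u => max (x u) 0 with hp
  have hnn : ∀ u, 0 ≤ n u := fun u => le_max_right _ _
  have hpn : ∀ u, 0 ≤ p u := fun u => le_max_right _ _
  have hxpn : x = p - n := by
    funext u
    simp only [hp, hn, Pi.sub_apply]
    rcases le_total (x u) 0 with h | h
    · rw [max_eq_right h, max_eq_left (by linarith)]; ring
    · rw [max_eq_left h, max_eq_right (by linarith)]; ring
  have hnp0 : ∀ u, n u * p u = 0 := by
    intro u
    rcases le_total (x u) 0 with h | h
    · simp [hp, max_eq_right h]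
    · simp [hn, max_eq_right (by linarith : -x u ≤ 0)]
  have hnne : n ≠ 0 := by
    intro h
    have : n v = 0 := by rw [h]; rfl
    simp only [hn] at this
    rw [max_eq_left (by linarith)] at this
    linarith
  -- n ⬝ᵥ b ≥ 0
  have h1 : 0 ≤ n ⬝ᵥ b := Finset.sum_nonneg fun u _ => mul_nonneg (hnn u) (hb u)
  -- n ⬝ᵥ (M *ᵥ p) ≤ 0
  have h2 : n ⬝ᵥ (M *ᵥ p) ≤ 0 := by
    have : n ⬝ᵥ (M *ᵥ p) = lam * (n ⬝ᵥ p) - n ⬝ᵥ (A *ᵥ p) := by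
      rw [hM, sub_mulVec, dotProduct_sub, smul_mulVec, one_mulVec, dotProduct_smul,
        smul_eq_mul]
    rw [this]
    have hnp : n ⬝ᵥ p = 0 := by
      simp only [dotProduct]
      exact Finset.sum_eq_zero fun u _ => hnp0 u
    rw [hnp, mul_zero, zero_sub, neg_nonpos]
    refine Finset.sum_nonneg fun u _ => mul_nonneg (hnn u) ?_
    exact Finset.sum_nonneg fun w _ => mul_nonneg (hA0 u w) (hpn w)
  have h3 : 0 < n ⬝ᵥ (M *ᵥ n) := hq n hnne
  have h4 : n ⬝ᵥ (M *ᵥ x) = n ⬝ᵥ (M *ᵥ p) - n ⬝ᵥ (M *ᵥ n) := by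
    rw [hxpn, mulVec_sub, dotProduct_sub]
  rw [hx] at h4
  linarith

/-- for a finite tree `T` with adjacency matrix `A`, distinguished vertex `t`,
and a real `λ` strictly larger than the largest eigenvalue of `A`: the matrix `λI - A` is
invertible, its inverse has strictly positive `(t,t)` entry `c`, and with `α := 1/c` the
vector `ψ := α • (λI - A)⁻¹ e_t` is entrywise positive, has `ψ t = 1`, satisfies
`(A + α e_t e_tᵀ) ψ = λ ψ`, and `λ` is the largest eigenvalue of `A + α e_t e_tᵀ`. -/
theorem selfLoopTree_top_eigenvector
    {V : Type*} [Fintype V] [DecidableEq V] [Nonempty V]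
    (T : SimpleGraph V) [DecidableRel T.Adj] (hT : T.IsTree) (t : V)
    (A : Matrix V V ℝ) (hA : A = T.adjMatrix ℝ)
    (lam : ℝ) (hlam : sSup (spectrum ℝ A) < lam)
    (c : ℝ) (hc : c = (lam • (1 : Matrix V V ℝ) - A)⁻¹ t t)
    (α : ℝ) (hα : α = c⁻¹)
    (ψ : V → ℝ) (hψ : ψ = α • ((lam • (1 : Matrix V V ℝ) - A)⁻¹ *ᵥ Pi.single t 1)) :
    IsUnit (lam • (1 : Matrix V V ℝ) - A) ∧
    0 < c ∧
    (∀ v : V, 0 < ψ v) ∧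
    ψ t = 1 ∧
    (A + Matrix.single t t α) *ᵥ ψ = lam • ψ ∧
    lam ∈ spectrum ℝ (A + Matrix.single t t α) ∧
    (∀ μ ∈ spectrum ℝ (A + Matrix.single t t α), μ ≤ lam) := by
  have hA0 : ∀ u v, 0 ≤ A u v := by
    intro u v
    rw [hA, SimpleGraph.adjMatrix_apply]
    split <;> norm_num
  have hA1 : ∀ u v, T.Adj u v → A u v = 1 := by
    intro u v huv
    rw [hA, SimpleGraph.adjMatrix_apply, if_pos huv]
  have hAdiag : ∀ v, A v v = 0 := by
    intro v
    rw [hA, SimpleGraph.adjMatrix_apply, if_neg (T.irrefl)]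
  have hAsymm : Aᵀ = A := by rw [hA]; exact T.transpose_adjMatrix
  have hAH : A.IsHermitian := by
    rw [Matrix.IsHermitian, Matrix.conjTranspose_eq_transpose_of_trivial, hAsymm]
  -- eigenvalue bound
  have hbdd : BddAbove (spectrum ℝ A) := by
    rw [hAH.spectrum_real_eq_range_eigenvalues]
    exact (Set.finite_range _).bddAbove
  have heig : ∀ i, hAH.eigenvalues i < lam := fun i =>
    lt_of_le_of_lt (le_csSup hbdd (hAH.eigenvalues_mem_spectrum_real i)) hlam
  set M : Matrix V V ℝ := lam • (1 : Matrix V V ℝ) - A with hM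
  have hq : ∀ z : V → ℝ, z ≠ 0 → 0 < z ⬝ᵥ (M *ᵥ z) := fun z hz => quad_pos' A hAH lam heig z hz
  -- lam > 0
  have hlam0 : 0 < lam := by
    have h := hq (Pi.single t 1) (by
      intro h
      have := congrFun h t
      simp at this)
    rw [hM] at h
    simpa [hAdiag t] using h
  -- invertibility
  have hdet : IsUnit M.det := by
    rw [isUnit_iff_ne_zero]
    intro h0
    obtain ⟨z, hz, hMz⟩ := (Matrix.exists_mulVec_eq_zero_iff).mpr h0
    have := hq z hz
    rw [hMz] at this
    simp at this
  have hMunit : IsUnit M := (Matrix.isUnit_iff_isUnit_det M).mpr hdet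
  set B : Matrix V V ℝ := M⁻¹ with hB
  have hMB : M * B = 1 := Matrix.mul_nonsing_inv M hdet
  set x : V → ℝ := B *ᵥ Pi.single t 1 with hx
  have hMx : M *ᵥ x = Pi.single t 1 := by
    rw [hx, mulVec_mulVec, hMB, one_mulVec]
  have hxne : x ≠ 0 := by
    intro h
    rw [h, mulVec_zero] at hMx
    have := congrFun hMx t
    simp at this
  have hxt : x t = c := by
    rw [hc]
    show (B *ᵥ Pi.single t 1) t = B t t
    simp
  -- c > 0
  have hcpos : 0 < c := by
    have h := hq x hxne
    rw [hMx] at h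
    rwa [dotProduct_single, mul_one, hxt] at h
  have hαpos : 0 < α := by rw [hα]; exact inv_pos.mpr hcpos
  -- nonnegativity
  have hxnn : ∀ v, 0 ≤ x v :=
    nonneg_sol' A hA0 lam hq x (Pi.single t 1)
      (fun v => by
        rcases eq_or_ne v t with h | h
        · subst h; simp
        · simp [Pi.single_eq_of_ne h]) hMx
  -- basic linear relation: lam • x = A *ᵥ x + e_t
  have hrel : ∀ v, lam * x v = (A *ᵥ x) v + (Pi.single t 1 : V → ℝ) v := by
    intro v
    have h := congrFun hMx v
    rw [hM, sub_mulVec, smul_mulVec, one_mulVec] at h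
    simp only [Pi.sub_apply, Pi.smul_apply, smul_eq_mul] at h
    linarith
  -- positivity by connectivity
  have hstep : ∀ u v, T.Adj u v → 0 < x u → 0 < x v := by
    intro u v huv hu
    have h := hrel v
    have hge : A v u * x u ≤ (A *ᵥ x) v := by
      rw [mulVec, dotProduct]
      exact Finset.single_le_sum (f := fun w => A v w * x w)
        (fun w _ => mul_nonneg (hA0 v w) (hxnn w)) (Finset.mem_univ u)
    rw [hA1 v u huv.symm, one_mul] at hge
    have hsing : (0:ℝ) ≤ (Pi.single t 1 : V → ℝ) v := by
      rcases eq_or_ne v t with h' | h'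
      · subst h'; simp
      · simp [Pi.single_eq_of_ne h']
    nlinarith [hxnn v]
  have hxtpos : 0 < x t := by rw [hxt]; exact hcpos
  have hwalk : ∀ u v : V, T.Walk u v → 0 < x u → 0 < x v := by
    intro u v w
    induction w with
    | nil => exact id
    | cons h p ih => exact fun hu => ih (hstep _ _ h hu)
  have hxpos : ∀ v, 0 < x v := fun v =>
    (hT.isConnected.preconnected t v).elim fun w => hwalk t v w hxtpos
  have hψpos : ∀ v, 0 < ψ v := by
    intro v
    rw [hψ]
    exact mul_pos hαpos (hxpos v)
  have hψt : ψ t = 1 := by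
    rw [hψ]
    show α * x t = 1
    rw [hxt, hα]
    field_simp
  -- eigen equation
  set A' : Matrix V V ℝ := A + Matrix.single t t α with hA'
  have hA'0 : ∀ u v, 0 ≤ A' u v := by
    intro u v
    rw [hA']
    have : (0:ℝ) ≤ Matrix.single t t α u v := by
      rw [Matrix.single]
      dsimp
      split
      · exact hαpos.le
      · rfl
    have := hA0 u v
    simp only [Matrix.add_apply]
    linarith
  have hA'symm : A'ᵀ = A' := by
    rw [hA', Matrix.transpose_add, hAsymm]
    congr 1
    ext u v
    simp only [Matrix.transpose_apply, Matrix.single, Matrix.of_apply]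
    by_cases h1 : t = u <;> by_cases h2 : t = v <;> simp [h1, h2]
  have hstdψ : Matrix.single t t α *ᵥ ψ = α • (Pi.single t 1 : V → ℝ) := by
    funext v
    show (∑ u, Matrix.single t t α v u * ψ u) = _
    rcases eq_or_ne v t with hv | hv
    · rw [Finset.sum_eq_single t (fun u _ hu => by
        simp [Matrix.single, Ne.symm hu]) (by simp)]
      simp [Matrix.single, hv, hψt]
    · rw [Finset.sum_eq_zero (fun u _ => by
        rw [Matrix.single_apply_of_ne _ _ _ _ _ (fun hh => hv hh.1.symm), zero_mul])]
      simp [Pi.single_eq_of_ne hv]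
  have heigeq : A' *ᵥ ψ = lam • ψ := by
    rw [hA', add_mulVec, hstdψ, hψ]
    funext v
    have h := hrel v
    simp only [Pi.add_apply, Pi.smul_apply, smul_eq_mul, mulVec_smul]
    rw [← mul_add, ← h]
    ring
  have hψne : ψ ≠ 0 := by
    intro h
    have := congrFun h t
    rw [hψt] at this
    simp at this
  have hspec : lam ∈ spectrum ℝ A' := by
    rw [spectrum.mem_iff]
    intro hU
    have hdet' : IsUnit (lam • (1 : Matrix V V ℝ) - A').det := by
      rw [← Algebra.algebraMap_eq_smul_one]
      exact (Matrix.isUnit_iff_isUnit_det _).mp hU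
    have h0 : (lam • (1 : Matrix V V ℝ) - A') *ᵥ ψ = 0 := by
      rw [sub_mulVec, smul_mulVec, one_mulVec, heigeq, sub_self]
    have : (lam • (1 : Matrix V V ℝ) - A').det = 0 :=
      (Matrix.exists_mulVec_eq_zero_iff).mp ⟨ψ, hψne, h0⟩
    rw [this] at hdet'
    exact (isUnit_iff_ne_zero.mp hdet') rfl
  have hmax : ∀ μ ∈ spectrum ℝ A', μ ≤ lam := by
    intro μ hμ
    rw [spectrum.mem_iff] at hμ
    have hdet0 : (μ • (1 : Matrix V V ℝ) - A').det = 0 := by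
      by_contra h0
      exact hμ (by
        rw [Algebra.algebraMap_eq_smul_one]
        exact (Matrix.isUnit_iff_isUnit_det _).mpr (isUnit_iff_ne_zero.mpr h0))
    obtain ⟨φ, hφne, hφ0⟩ := (Matrix.exists_mulVec_eq_zero_iff).mpr hdet0
    have hφ : A' *ᵥ φ = μ • φ := by
      rw [sub_mulVec, smul_mulVec, one_mulVec, sub_eq_zero] at hφ0
      exact hφ0.symm
    set g : V → ℝ := fun v => |φ v| with hg
    have hkey : ∀ v, |μ| * g v ≤ (A' *ᵥ g) v := by
      intro v
      have h1 : |μ| * g v = |(A' *ᵥ φ) v| := by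
        rw [hφ]
        simp [hg, abs_mul]
      rw [h1, mulVec, dotProduct]
      refine (Finset.abs_sum_le_sum_abs _ _).trans ?_
      apply Finset.sum_le_sum
      intro u _
      rw [abs_mul, abs_of_nonneg (hA'0 v u)]
    have hsum : |μ| * (ψ ⬝ᵥ g) ≤ lam * (ψ ⬝ᵥ g) := by
      have h2 : ψ ⬝ᵥ (A' *ᵥ g) = lam * (ψ ⬝ᵥ g) := by
        rw [dotProduct_mulVec, ← mulVec_transpose, hA'symm, heigeq]
        rw [smul_dotProduct, smul_eq_mul]
      calc |μ| * (ψ ⬝ᵥ g) = ∑ v, ψ v * (|μ| * g v) := by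
            rw [dotProduct, Finset.mul_sum]
            exact Finset.sum_congr rfl fun v _ => by ring
        _ ≤ ∑ v, ψ v * (A' *ᵥ g) v := Finset.sum_le_sum fun v _ =>
            mul_le_mul_of_nonneg_left (hkey v) (hψpos v).le
        _ = lam * (ψ ⬝ᵥ g) := h2
    have hψg : 0 < ψ ⬝ᵥ g := by
      obtain ⟨u, hu⟩ : ∃ u, φ u ≠ 0 := by
        by_contra h
        push_neg at h
        exact hφne (funext h)
      apply Finset.sum_pos'
      · exact fun v _ => mul_nonneg (hψpos v).le (abs_nonneg _)
      · exact ⟨u, Finset.mem_univ u, mul_pos (hψpos u) (abs_pos.mpr hu)⟩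
    have : |μ| ≤ lam := le_of_mul_le_mul_right (by linarith [hsum]) hψg
    exact (le_abs_self μ).trans this
  exact ⟨hMunit, hcpos, hψpos, hψt, heigeq, hspec, hmax⟩
end

section
/- Let G be a connected simple graph on a finite nonempty vertex set with adjacency matrix A, and let λ be a real number strictly greater than the largest eigenvalue of A. Then λI − A is invertible and every entry of (λI − A)⁻¹ is strictly positive. -/
open Matrix

section Aux

variable {V : Type*} [Fintype V] [DecidableEq V]

private lemma myConjPow (U : Matrix V V ℝ) (hU : U * star U = 1) (hU' : star U * U = 1)
    (d : V → ℝ) (m : ℕ) :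
    (U * diagonal d * star U) ^ m = U * diagonal (fun k => d k ^ m) * star U := by
  induction m with
  | zero => simpa using hU.symm
  | succ m ih =>
    rw [pow_succ, ih]
    simp only [Matrix.mul_assoc]
    rw [← Matrix.mul_assoc (star U) U, hU', Matrix.one_mul,
      ← Matrix.mul_assoc (diagonal _), diagonal_mul_diagonal]
    simp [pow_succ, Matrix.mul_assoc]

private lemma pow_spectral (A : Matrix V V ℝ) (hH : A.IsHermitian) (m : ℕ) :
    A ^ m = (hH.eigenvectorUnitary : Matrix V V ℝ) * diagonal (fun k => hH.eigenvalues k ^ m) *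
      star (hH.eigenvectorUnitary : Matrix V V ℝ) := by
  have hspec : A = (hH.eigenvectorUnitary : Matrix V V ℝ) * diagonal hH.eigenvalues *
      star (hH.eigenvectorUnitary : Matrix V V ℝ) := by simpa using hH.spectral_theorem
  rw [show A ^ m = ((hH.eigenvectorUnitary : Matrix V V ℝ) * diagonal hH.eigenvalues *
      star (hH.eigenvectorUnitary : Matrix V V ℝ)) ^ m from by rw [← hspec]]
  exact myConjPow _ ((Matrix.mem_unitaryGroup_iff).mp hH.eigenvectorUnitary.2)
    ((Matrix.mem_unitaryGroup_iff').mp hH.eigenvectorUnitary.2) _ m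

private lemma entry_conj (U : Matrix V V ℝ) (d : V → ℝ) (i j : V) :
    (U * diagonal d * star U) i j = ∑ k, d k * (U i k * U j k) := by
  rw [Matrix.mul_apply]
  refine Finset.sum_congr rfl fun k _ => ?_
  rw [Matrix.mul_diagonal, Matrix.star_apply]
  simp; ring

private lemma shift_conj (U : Matrix V V ℝ) (hU : U * star U = 1) (d : V → ℝ) (c : ℝ) :
    c • (1 : Matrix V V ℝ) - U * diagonal d * star U =
      U * diagonal (fun k => c - d k) * star U := by
  have h1 : c • (1 : Matrix V V ℝ) = U * diagonal (fun _ : V => c) * star U := by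
    rw [show diagonal (fun _ : V => c) = c • (1 : Matrix V V ℝ) from by rw [smul_one_eq_diagonal]]
    rw [Matrix.mul_smul, Matrix.smul_mul, Matrix.mul_one, hU]
  rw [h1, ← Matrix.sub_mul, ← Matrix.mul_sub, diagonal_sub]

private lemma shifted_psd (A : Matrix V V ℝ) (hH : A.IsHermitian) (c : ℝ)
    (hc : ∀ k, hH.eigenvalues k ≤ c) : (c • (1 : Matrix V V ℝ) - A).PosSemidef := by
  have hU : (hH.eigenvectorUnitary : Matrix V V ℝ) * star (hH.eigenvectorUnitary : Matrix V V ℝ) = 1 :=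
    (Matrix.mem_unitaryGroup_iff).mp hH.eigenvectorUnitary.2
  have hspec : A = (hH.eigenvectorUnitary : Matrix V V ℝ) * diagonal hH.eigenvalues *
      star (hH.eigenvectorUnitary : Matrix V V ℝ) := by simpa using hH.spectral_theorem
  rw [show c • (1 : Matrix V V ℝ) - A = c • (1 : Matrix V V ℝ) -
      (hH.eigenvectorUnitary : Matrix V V ℝ) * diagonal hH.eigenvalues *
      star (hH.eigenvectorUnitary : Matrix V V ℝ) from by rw [← hspec]]
  rw [shift_conj _ hU]
  exact (posSemidef_diagonal_iff.mpr (fun k => by simpa using hc k)).mul_mul_conjTranspose_same _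

private lemma rayleigh_le_s4 (A : Matrix V V ℝ) (c : ℝ)
    (hpsd : (c • (1 : Matrix V V ℝ) - A).PosSemidef) (x : V → ℝ) :
    x ⬝ᵥ (A *ᵥ x) ≤ c * (x ⬝ᵥ x) := by
  have h := hpsd.dotProduct_mulVec_nonneg x
  rw [star_trivial, sub_mulVec, dotProduct_sub, smul_mulVec, one_mulVec,
    dotProduct_smul] at h
  simpa [smul_eq_mul] using sub_nonneg.mp h

private lemma eig_lower (A : Matrix V V ℝ) (hH : A.IsHermitian) (hA0 : ∀ i j, 0 ≤ A i j) (c : ℝ)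
    (hpsd : (c • (1 : Matrix V V ℝ) - A).PosSemidef) (j : V) : -c ≤ hH.eigenvalues j := by
  set v : V → ℝ := ⇑(hH.eigenvectorBasis j) with hvdef
  have hv : A *ᵥ v = hH.eigenvalues j • v := hH.mulVec_eigenvectorBasis j
  have hv0 : v ≠ 0 := by
    have := hH.eigenvectorBasis.orthonormal.ne_zero j
    intro h
    apply this
    ext k
    exact congrFun h k
  have hn : 0 < v ⬝ᵥ v :=
    lt_of_le_of_ne (Finset.sum_nonneg fun i _ => mul_self_nonneg (v i))
      (Ne.symm ((dotProduct_self_eq_zero (v := v)).ne.mpr hv0))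
  set w : V → ℝ := fun k => |v k| with hwdef
  have hww : w ⬝ᵥ w = v ⬝ᵥ v := by
    unfold w
    simp [dotProduct, abs_mul_abs_self]
  have h1 : v ⬝ᵥ (A *ᵥ v) = hH.eigenvalues j * (v ⬝ᵥ v) := by
    rw [hv, dotProduct_smul, smul_eq_mul]
  have h4 : -(v ⬝ᵥ (A *ᵥ v)) ≤ w ⬝ᵥ (A *ᵥ w) := by
    simp only [dotProduct, mulVec, dotProduct, ← Finset.sum_neg_distrib]
    refine Finset.sum_le_sum fun i _ => ?_
    rw [Finset.mul_sum, Finset.mul_sum, ← Finset.sum_neg_distrib]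
    refine Finset.sum_le_sum fun x _ => ?_
    calc -(v i * (A i x * v x)) ≤ |v i * (A i x * v x)| := neg_le_abs _
    _ = |v i| * (A i x * |v x|) := by
        rw [abs_mul, abs_mul, abs_of_nonneg (hA0 i x)]
  have h2 := rayleigh_le_s4 A c hpsd w
  rw [hww] at h2
  have h5 : -(hH.eigenvalues j) * (v ⬝ᵥ v) ≤ c * (v ⬝ᵥ v) := by
    calc -(hH.eigenvalues j) * (v ⬝ᵥ v) = -(v ⬝ᵥ (A *ᵥ v)) := by rw [h1]; ring
    _ ≤ w ⬝ᵥ (A *ᵥ w) := h4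
    _ ≤ c * (v ⬝ᵥ v) := h2
  have := le_of_mul_le_mul_right (by linarith [h5] : -(hH.eigenvalues j) * (v ⬝ᵥ v) ≤ c * (v ⬝ᵥ v)) hn
  linarith

private lemma series_id (A : Matrix V V ℝ) (lam : ℝ) (hlam : lam ≠ 0) (m : ℕ) :
    (lam • (1 : Matrix V V ℝ) - A) * (∑ k ∈ Finset.range m, (lam⁻¹ ^ (k+1)) • A ^ k) =
      1 - lam⁻¹ ^ m • A ^ m := by
  induction m with
  | zero => simp
  | succ m ih =>
    rw [Finset.sum_range_succ, Matrix.mul_add, ih, Matrix.mul_smul, Matrix.sub_mul,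
      Matrix.smul_mul, Matrix.one_mul, ← pow_succ']
    rw [smul_sub, smul_smul, show lam⁻¹ ^ (m + 1) * lam = lam⁻¹ ^ m from by
      rw [pow_succ, mul_assoc, inv_mul_cancel₀ hlam, mul_one]]
    abel

end Aux

/-- for a connected simple graph `G` on a finite nonempty vertex set with
adjacency matrix `A` and a real `λ` strictly larger than the largest eigenvalue of `A`,
the matrix `λI - A` is invertible and all entries of its inverse are strictly positive. -/
theorem resolvent_entrywise_pos_of_connected
    {V : Type*} [Fintype V] [DecidableEq V] [Nonempty V]
    (G : SimpleGraph V) [DecidableRel G.Adj] (hG : G.Connected)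
    (A : Matrix V V ℝ) (hA : A = G.adjMatrix ℝ)
    (lam : ℝ) (hlam : sSup (spectrum ℝ A) < lam) :
    IsUnit (lam • (1 : Matrix V V ℝ) - A) ∧
    (∀ i j : V, 0 < (lam • (1 : Matrix V V ℝ) - A)⁻¹ i j) := by
  have hH : A.IsHermitian := by
    rw [hA, Matrix.IsHermitian, conjTranspose, G.isSymm_adjMatrix.eq]
    ext i j; simp
  have hA0 : ∀ i j, 0 ≤ A i j := by
    intro i j; rw [hA]; by_cases h : G.Adj i j <;> simp [h]
  set c : ℝ := sSup (spectrum ℝ A) with hc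
  have hbdd : BddAbove (spectrum ℝ A) := (Matrix.finite_real_spectrum (A := A)).bddAbove
  have hub : ∀ k, hH.eigenvalues k ≤ c :=
    fun k => le_csSup hbdd (hH.eigenvalues_mem_spectrum_real k)
  have hpsd : (c • (1 : Matrix V V ℝ) - A).PosSemidef := shifted_psd A hH c hub
  have hlow : ∀ k, -c ≤ hH.eigenvalues k := eig_lower A hH hA0 c hpsd
  have hc0 : 0 ≤ c := by
    obtain j0 := Classical.arbitrary V
    linarith [hub j0, hlow j0]
  have hlam0 : 0 < lam := lt_of_le_of_lt hc0 hlam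
  have habs : ∀ k, |hH.eigenvalues k| < lam :=
    fun k => abs_lt.mpr ⟨by linarith [hlow k], by linarith [hub k]⟩
  -- invertibility
  have hnotmem : lam ∉ spectrum ℝ A := fun h => absurd (le_csSup hbdd h) (not_le.mpr hlam)
  have hunit : IsUnit (lam • (1 : Matrix V V ℝ) - A) := by
    have := spectrum.notMem_iff.mp hnotmem
    rwa [Algebra.algebraMap_eq_smul_one] at this
  refine ⟨hunit, fun i j => ?_⟩
  set M : Matrix V V ℝ := lam • (1 : Matrix V V ℝ) - A with hM
  have hdet : IsUnit M.det := (isUnit_iff_isUnit_det M).mp hunit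
  have hMinv : M⁻¹ * M = 1 := nonsing_inv_mul M hdet
  -- the resolvent identity
  have key : ∀ m : ℕ, M⁻¹ = (∑ k ∈ Finset.range m, (lam⁻¹ ^ (k+1)) • A ^ k) +
      lam⁻¹ ^ m • (M⁻¹ * A ^ m) := by
    intro m
    have h := congrArg (fun X => M⁻¹ * X) (series_id A lam hlam0.ne' m)
    rw [← hM] at h
    simp only [← Matrix.mul_assoc, hMinv, Matrix.one_mul, Matrix.mul_sub, Matrix.mul_one,
      Matrix.mul_smul] at h
    rw [h]
    abel
  -- entrywise nonnegativity of powers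
  have hApow : ∀ (m : ℕ) (u v : V), 0 ≤ (A ^ m) u v := by
    intro m u v
    rw [hA, SimpleGraph.adjMatrix_pow_apply_eq_card_walk]
    positivity
  -- entrywise convergence to zero
  have hten : Filter.Tendsto (fun m : ℕ => lam⁻¹ ^ m * (M⁻¹ * A ^ m) i j)
      Filter.atTop (nhds 0) := by
    have hform : ∀ m : ℕ, lam⁻¹ ^ m * (M⁻¹ * A ^ m) i j =
        ∑ k, ∑ l, (hH.eigenvalues l * lam⁻¹) ^ m *
          (M⁻¹ i k * ((hH.eigenvectorUnitary : Matrix V V ℝ) k l *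
            (hH.eigenvectorUnitary : Matrix V V ℝ) j l)) := by
      intro m
      rw [Matrix.mul_apply, Finset.mul_sum]
      refine Finset.sum_congr rfl fun k _ => ?_
      rw [pow_spectral A hH m, entry_conj, Finset.mul_sum, Finset.mul_sum]
      refine Finset.sum_congr rfl fun l _ => ?_
      rw [mul_pow]
      ring
    simp only [hform]
    have : (0 : ℝ) = ∑ k : V, ∑ l : V, (0 : ℝ) := by simp
    rw [this]
    refine tendsto_finset_sum _ fun k _ => ?_
    refine tendsto_finset_sum _ fun l _ => ?_
    have habs1 : |hH.eigenvalues l * lam⁻¹| < 1 := by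
      rw [abs_mul, abs_inv, abs_of_pos hlam0, ← div_eq_mul_inv, div_lt_one hlam0]
      exact habs l
    simpa using (tendsto_pow_atTop_nhds_zero_of_abs_lt_one habs1).mul_const _
  -- entries of partial sums converge to the inverse's entry
  have hSentry : ∀ m : ℕ, (∑ k ∈ Finset.range m, (lam⁻¹ ^ (k+1)) • A ^ k) i j =
      ∑ k ∈ Finset.range m, lam⁻¹ ^ (k+1) * (A ^ k) i j := by
    intro m
    rw [Matrix.sum_apply]
    exact Finset.sum_congr rfl fun k _ => by simp
  have hStend : Filter.Tendsto (fun m : ℕ => ∑ k ∈ Finset.range m, lam⁻¹ ^ (k+1) * (A ^ k) i j)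
      Filter.atTop (nhds (M⁻¹ i j)) := by
    have heq : ∀ m : ℕ, ∑ k ∈ Finset.range m, lam⁻¹ ^ (k+1) * (A ^ k) i j =
        M⁻¹ i j - lam⁻¹ ^ m * (M⁻¹ * A ^ m) i j := by
      intro m
      have := congrArg (fun X : Matrix V V ℝ => X i j) (key m)
      simp only [Matrix.add_apply, Matrix.smul_apply, smul_eq_mul] at this
      rw [← hSentry]
      linarith [this]
    simp only [heq]
    simpa using (Filter.Tendsto.const_sub (M⁻¹ i j) hten)
  -- find a walk and conclude positivity
  obtain ⟨p⟩ := hG.preconnected i j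
  set m0 := p.length with hm0
  have hwalkpos : 0 < (A ^ m0) i j := by
    rw [hA, SimpleGraph.adjMatrix_pow_apply_eq_card_walk]
    have : Nonempty {q : G.Walk i j | q.length = m0} := ⟨⟨p, rfl⟩⟩
    exact_mod_cast Fintype.card_pos
  have hterm : ∀ k, 0 ≤ lam⁻¹ ^ (k+1) * (A ^ k) i j := fun k =>
    mul_nonneg (pow_nonneg (inv_nonneg.mpr hlam0.le) _) (hApow k i j)
  have hSpos : 0 < ∑ k ∈ Finset.range (m0 + 1), lam⁻¹ ^ (k+1) * (A ^ k) i j := by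
    refine Finset.sum_pos' (fun k _ => hterm k) ⟨m0, Finset.self_mem_range_succ m0, ?_⟩
    exact mul_pos (pow_pos (inv_pos.mpr hlam0) _) hwalkpos
  have hmono : ∀ m ≥ m0 + 1, ∑ k ∈ Finset.range (m0 + 1), lam⁻¹ ^ (k+1) * (A ^ k) i j ≤
      ∑ k ∈ Finset.range m, lam⁻¹ ^ (k+1) * (A ^ k) i j := fun m hm =>
    Finset.sum_le_sum_of_subset_of_nonneg (Finset.range_subset_range.mpr hm)
      (fun k _ _ => hterm k)
  exact lt_of_lt_of_le hSpos
    (ge_of_tendsto hStend (Filter.eventually_atTop.mpr ⟨m0 + 1, hmono⟩))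
end

section
/- Let G be a simple graph whose girth is at least g, and let u and v be vertices of G. If P₁ and P₂ are two paths in G from u to v, each of length strictly less than g/2, then P₁ = P₂. In other words, between any two vertices there is at most one path of length less than g/2. -/
open SimpleGraph Walk

private lemma aux_append_isPath {V : Type*} {G : SimpleGraph V} {a b c : V}
    {p : G.Walk a b} {q : G.Walk b c} (hp : p.IsPath) (hq : q.IsPath)
    (hd : ∀ x, x ∈ p.support → x ∈ q.support → x = b) : (p.append q).IsPath := by
  rw [Walk.isPath_def, Walk.support_append, List.nodup_append]
  refine ⟨hp.support_nodup, hq.support_nodup.tail, ?_⟩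
  intro x hx1 y hx2 rfl
  have hx2' : x ∈ q.support := List.mem_of_mem_tail hx2
  have hxb : x = b := hd x hx1 hx2'
  have hb : b ∉ q.support.tail := by
    have hnd := hq.support_nodup
    rw [q.support_eq_cons, List.nodup_cons] at hnd
    exact hnd.1
  exact hb (hxb ▸ hx2)

private lemma aux_edge_mem {V : Type*} {G : SimpleGraph V} {u v : V}
    {p : G.Walk u v} (hp : p.IsPath) (he : s(u, v) ∈ p.edges) :
    ∃ h : G.Adj u v, p = Walk.cons h Walk.nil := by
  cases p with
  | nil => simp at he
  | @cons _ b _ h' r =>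
    rw [Walk.edges_cons, List.mem_cons] at he
    rcases he with he | he
    · rw [Sym2.eq_iff] at he
      rcases he with ⟨-, hvb⟩ | ⟨hub, -⟩
      · subst hvb
        have hr : r = Walk.nil := (Walk.isPath_iff_eq_nil (p := r)).mp ((Walk.cons_isPath_iff _ _).mp hp).1
        exact ⟨h', by rw [hr]⟩
      · exact absurd h' (hub ▸ G.irrefl)
    · exact absurd (r.fst_mem_support_of_mem_edges he) ((Walk.cons_isPath_iff _ _).mp hp).2

/-- in a simple graph of girth at least `g` (every cycle has length at
least `g`), any two paths between the same pair of vertices of length strictly less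
than `g/2` are equal. -/
theorem path_unique_of_girth
    {V : Type*} (G : SimpleGraph V) (g : ℕ)
    (hgirth : ∀ (w : V) (c : G.Walk w w), c.IsCycle → g ≤ c.length)
    {u v : V} (P₁ P₂ : G.Walk u v) (h₁ : P₁.IsPath) (h₂ : P₂.IsPath)
    (hl₁ : (P₁.length : ℝ) < (g : ℝ) / 2) (hl₂ : (P₂.length : ℝ) < (g : ℝ) / 2) :
    P₁ = P₂ := by
  have key : ∀ n : ℕ, ∀ {u v : V} (P₁ P₂ : G.Walk u v), P₁.IsPath → P₂.IsPath →
      (P₁.length : ℝ) < (g : ℝ) / 2 → (P₂.length : ℝ) < (g : ℝ) / 2 →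
      P₁.length + P₂.length < n → P₁ = P₂ := by
    intro n
    classical
    induction n with
    | zero => intro _ _ _ _ _ _ _ _ h; omega
    | succ n ih =>
      intro u v P₁ P₂ h₁ h₂ hl₁ hl₂ hn
      by_cases hx : ∃ x, x ∈ P₁.support ∧ x ∈ P₂.support ∧ x ≠ u ∧ x ≠ v
      · obtain ⟨x, hx1, hx2, hxu, hxv⟩ := hx
        have hs₁ := P₁.take_spec hx1
        have hs₂ := P₂.take_spec hx2
        have hlen₁ : (P₁.takeUntil x hx1).length + (P₁.dropUntil x hx1).length = P₁.length := by
          conv_rhs => rw [← hs₁]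
          rw [Walk.length_append]
        have hlen₂ : (P₂.takeUntil x hx2).length + (P₂.dropUntil x hx2).length = P₂.length := by
          conv_rhs => rw [← hs₂]
          rw [Walk.length_append]
        have ht₁ : 1 ≤ (P₁.takeUntil x hx1).length := by
          rcases Nat.eq_zero_or_pos (P₁.takeUntil x hx1).length with h | h
          · exact absurd (Walk.eq_of_length_eq_zero h).symm hxu
          · exact h
        have ht₂ : 1 ≤ (P₂.takeUntil x hx2).length := by
          rcases Nat.eq_zero_or_pos (P₂.takeUntil x hx2).length with h | h
          · exact absurd (Walk.eq_of_length_eq_zero h).symm hxu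
          · exact h
        have hd₁ : 1 ≤ (P₁.dropUntil x hx1).length := by
          rcases Nat.eq_zero_or_pos (P₁.dropUntil x hx1).length with h | h
          · exact absurd (Walk.eq_of_length_eq_zero h) hxv
          · exact h
        have hd₂ : 1 ≤ (P₂.dropUntil x hx2).length := by
          rcases Nat.eq_zero_or_pos (P₂.dropUntil x hx2).length with h | h
          · exact absurd (Walk.eq_of_length_eq_zero h) hxv
          · exact h
        have e₁ : P₁.takeUntil x hx1 = P₂.takeUntil x hx2 := by
          refine ih _ _ (h₁.takeUntil hx1) (h₂.takeUntil hx2) ?_ ?_ (by omega)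
          · have : ((P₁.takeUntil x hx1).length : ℝ) ≤ (P₁.length : ℝ) := by
              exact_mod_cast by omega
            linarith
          · have : ((P₂.takeUntil x hx2).length : ℝ) ≤ (P₂.length : ℝ) := by
              exact_mod_cast by omega
            linarith
        have e₂ : P₁.dropUntil x hx1 = P₂.dropUntil x hx2 := by
          refine ih _ _ (h₁.dropUntil hx1) (h₂.dropUntil hx2) ?_ ?_ (by omega)
          · have : ((P₁.dropUntil x hx1).length : ℝ) ≤ (P₁.length : ℝ) := by
              exact_mod_cast by omega
            linarith
          · have : ((P₂.dropUntil x hx2).length : ℝ) ≤ (P₂.length : ℝ) := by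
              exact_mod_cast by omega
            linarith
        rw [← hs₁, ← hs₂, e₁, e₂]
      · push_neg at hx
        cases P₁ with
        | nil =>
          exact ((Walk.isPath_iff_eq_nil (p := P₂)).mp h₂).symm
        | @cons _ a _ h q =>
          obtain ⟨hqp, hu⟩ := (Walk.cons_isPath_iff _ _).mp h₁
          have haP₁ : a ∈ (Walk.cons h q).support := by
            rw [Walk.support_cons]
            exact List.mem_cons_of_mem _ q.start_mem_support
          by_cases hev : s(u, a) ∈ P₂.edges
          · -- then a = v and both paths are the single edge u-v
            have haP₂ : a ∈ P₂.support := P₂.snd_mem_support_of_mem_edges hev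
            have hav : a = v := hx a haP₁ haP₂ h.ne'
            subst hav
            have hq : q = Walk.nil := (Walk.isPath_iff_eq_nil (p := q)).mp hqp
            obtain ⟨h'', hP₂⟩ := aux_edge_mem h₂ hev
            rw [hq, hP₂]
          · -- build a cycle of length P₁.length + P₂.length < g
            have hpath : (q.append P₂.reverse).IsPath := by
              refine aux_append_isPath hqp h₂.reverse ?_
              intro x hxq hxr
              have hxP₂ : x ∈ P₂.support := by
                rwa [Walk.support_reverse, List.mem_reverse] at hxr
              have hxP₁ : x ∈ (Walk.cons h q).support := by
                rw [Walk.support_cons]; exact List.mem_cons_of_mem _ hxq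
              exact hx x hxP₁ hxP₂ (fun h' => hu (h' ▸ hxq))
            have hcyc : (Walk.cons h (q.append P₂.reverse)).IsCycle := by
              refine (cons_isCycle_iff _ h).mpr ⟨hpath, ?_⟩
              intro hmem
              rw [Walk.edges_append, List.mem_append] at hmem
              rcases hmem with hmem | hmem
              · exact hu (q.fst_mem_support_of_mem_edges hmem)
              · rw [Walk.edges_reverse, List.mem_reverse] at hmem
                exact hev hmem
            have hg := hgirth u _ hcyc
            rw [Walk.length_cons, Walk.length_append, Walk.length_reverse] at hg
            exfalso
            have h1 : ((Walk.cons h q).length : ℝ) + (P₂.length : ℝ) < (g : ℝ) := by linarith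
            rw [Walk.length_cons] at h1
            have h2 : (q.length + 1 + P₂.length : ℕ) < g := by exact_mod_cast h1
            omega
  exact key (P₁.length + P₂.length + 1) P₁ P₂ h₁ h₂ hl₁ hl₂ (by omega)
end

section
/- In the decorated-graph setting below, the largest eigenvalue λ_G of M is strictly greater than the largest eigenvalue λ_k of A_k for every k ∈ {1,…,K}, so that λ_G·I − A_k is invertible; and, setting α_k := ([(λ_G·I − A_k)⁻¹]_{t_k,t_k})⁻¹, one has λ_G = λ_E + β·Σ_{k=1}^{K} α_k⁻¹, and moreover, for every k, λ_G equals the largest eigenvalue of the matrix A_k + α_k·e_{t_k} e_{t_k}ᵀ. -/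
open Matrix

namespace DecorAux

variable {n : Type*} [Fintype n] [DecidableEq n]


variable {n : Type*} [Fintype n] [DecidableEq n]

noncomputable def uUnit {B : Matrix n n ℝ} (hB : B.IsHermitian) : (Matrix n n ℝ)ˣ :=
  ⟨hB.eigenvectorUnitary, star (hB.eigenvectorUnitary : Matrix n n ℝ),
    mem_unitaryGroup_iff.mp hB.eigenvectorUnitary.2,
    mem_unitaryGroup_iff'.mp hB.eigenvectorUnitary.2⟩

lemma spectrum_eq_range {B : Matrix n n ℝ} (hB : B.IsHermitian) :
    spectrum ℝ B = Set.range hB.eigenvalues := by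
  have h := hB.spectral_theorem
  have h2 : B = (uUnit hB : Matrix n n ℝ) * diagonal hB.eigenvalues * ((uUnit hB)⁻¹ : (Matrix n n ℝ)ˣ) := by
    simpa [uUnit] using h
  conv_lhs => rw [h2]
  rw [spectrum.units_conjugate, spectrum_diagonal]

lemma spectrum_bddAbove {B : Matrix n n ℝ} (hB : B.IsHermitian) :
    BddAbove (spectrum ℝ B) := by
  rw [spectrum_eq_range hB]
  exact (Set.finite_range _).bddAbove

lemma le_sSup_spectrum {B : Matrix n n ℝ} (hB : B.IsHermitian) {lam : ℝ}
    (h : lam ∈ spectrum ℝ B) : lam ≤ sSup (spectrum ℝ B) :=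
  le_csSup (spectrum_bddAbove hB) h

lemma mem_spectrum_of_eigen {B : Matrix n n ℝ} {v : n → ℝ} (hv : v ≠ 0) {μ : ℝ}
    (h : B *ᵥ v = μ • v) : μ ∈ spectrum ℝ B := by
  rw [spectrum.mem_iff]
  intro hunit
  rw [Algebra.algebraMap_eq_smul_one, Matrix.isUnit_iff_isUnit_det, isUnit_iff_ne_zero] at hunit
  apply hunit
  rw [← Matrix.exists_mulVec_eq_zero_iff]
  exact ⟨v, hv, by simp [sub_mulVec, h, Matrix.smul_mulVec]⟩

lemma exists_eigen_of_mem_spectrum {B : Matrix n n ℝ} {μ : ℝ}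
    (h : μ ∈ spectrum ℝ B) : ∃ v : n → ℝ, v ≠ 0 ∧ B *ᵥ v = μ • v := by
  rw [spectrum.mem_iff] at h
  rw [Algebra.algebraMap_eq_smul_one, Matrix.isUnit_iff_isUnit_det, isUnit_iff_ne_zero,
    not_not, ← Matrix.exists_mulVec_eq_zero_iff] at h
  obtain ⟨v, hv, hveq⟩ := h
  refine ⟨v, hv, ?_⟩
  rw [sub_mulVec, Matrix.smul_mulVec, one_mulVec, sub_eq_zero] at hveq
  exact hveq.symm

lemma VVt {B : Matrix n n ℝ} (hB : B.IsHermitian) :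
    (hB.eigenvectorUnitary : Matrix n n ℝ) * (hB.eigenvectorUnitary : Matrix n n ℝ)ᵀ = 1 := by
  have := mem_unitaryGroup_iff.mp hB.eigenvectorUnitary.2
  simpa [Matrix.star_eq_conjTranspose, conjTranspose_eq_transpose_of_trivial] using this

lemma spectral' {B : Matrix n n ℝ} (hB : B.IsHermitian) :
    B = (hB.eigenvectorUnitary : Matrix n n ℝ) * diagonal hB.eigenvalues *
    (hB.eigenvectorUnitary : Matrix n n ℝ)ᵀ := by
  have := hB.spectral_theorem
  simpa [Matrix.star_eq_conjTranspose, conjTranspose_eq_transpose_of_trivial] using this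

lemma V_mulVec_y {B : Matrix n n ℝ} (hB : B.IsHermitian) (x : n → ℝ) :
    (hB.eigenvectorUnitary : Matrix n n ℝ) *ᵥ
    ((hB.eigenvectorUnitary : Matrix n n ℝ)ᵀ *ᵥ x) = x := by
  rw [Matrix.mulVec_mulVec, VVt hB, Matrix.one_mulVec]

lemma dot_self_eq {B : Matrix n n ℝ} (hB : B.IsHermitian) (x : n → ℝ) :
    x ⬝ᵥ x = ∑ i, (((hB.eigenvectorUnitary : Matrix n n ℝ)ᵀ *ᵥ x) i)^2 := by
  set V : Matrix n n ℝ := (hB.eigenvectorUnitary : Matrix n n ℝ) with hV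
  have h1 : (Vᵀ *ᵥ x) ⬝ᵥ (Vᵀ *ᵥ x) = ((Vᵀ *ᵥ x) ᵥ* Vᵀ) ⬝ᵥ x := Matrix.dotProduct_mulVec _ _ _
  have h2 : ((Vᵀ *ᵥ x) ᵥ* Vᵀ) = V *ᵥ (Vᵀ *ᵥ x) := by
    rw [← Matrix.mulVec_transpose, Matrix.transpose_transpose]
  have h3 : (Vᵀ *ᵥ x) ⬝ᵥ (Vᵀ *ᵥ x) = x ⬝ᵥ x := by
    rw [h1, h2, V_mulVec_y hB]
  rw [← h3]
  simp only [dotProduct]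
  exact Finset.sum_congr rfl fun i _ => by ring

lemma mulVec_eq_VDy {B : Matrix n n ℝ} (hB : B.IsHermitian) (x : n → ℝ) :
    B *ᵥ x = (hB.eigenvectorUnitary : Matrix n n ℝ) *ᵥ
    (diagonal hB.eigenvalues *ᵥ ((hB.eigenvectorUnitary : Matrix n n ℝ)ᵀ *ᵥ x)) := by
  conv_lhs => rw [spectral' hB]
  simp [Matrix.mulVec_mulVec, Matrix.mul_assoc]

lemma dot_mulVec_eq {B : Matrix n n ℝ} (hB : B.IsHermitian) (x : n → ℝ) :
    x ⬝ᵥ B *ᵥ x =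
    ∑ i, hB.eigenvalues i * (((hB.eigenvectorUnitary : Matrix n n ℝ)ᵀ *ᵥ x) i)^2 := by
  set V : Matrix n n ℝ := (hB.eigenvectorUnitary : Matrix n n ℝ) with hV
  rw [mulVec_eq_VDy hB, Matrix.dotProduct_mulVec, ← Matrix.mulVec_transpose]
  simp only [dotProduct, Matrix.mulVec_diagonal]
  exact Finset.sum_congr rfl fun i _ => by ring

lemma sSup_spectrum_eq_max {B : Matrix n n ℝ} [Nonempty n] (hB : B.IsHermitian) :
    ∃ i0, sSup (spectrum ℝ B) = hB.eigenvalues i0 ∧ ∀ i, hB.eigenvalues i ≤ hB.eigenvalues i0 := by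
  obtain ⟨i0, hi0⟩ := Finite.exists_max hB.eigenvalues
  refine ⟨i0, ?_, hi0⟩
  rw [spectrum_eq_range hB]
  exact IsGreatest.csSup_eq ⟨⟨i0, rfl⟩, by rintro z ⟨i, rfl⟩; exact hi0 i⟩

lemma sSup_spectrum_mem {B : Matrix n n ℝ} [Nonempty n] (hB : B.IsHermitian) :
    sSup (spectrum ℝ B) ∈ spectrum ℝ B := by
  obtain ⟨i0, h1, _⟩ := sSup_spectrum_eq_max hB
  rw [h1, spectrum_eq_range hB]; exact ⟨i0, rfl⟩

lemma rayleigh_le {B : Matrix n n ℝ} [Nonempty n] (hB : B.IsHermitian) (x : n → ℝ) :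
    x ⬝ᵥ B *ᵥ x ≤ sSup (spectrum ℝ B) * (x ⬝ᵥ x) := by
  obtain ⟨i0, h1, h2⟩ := sSup_spectrum_eq_max hB
  rw [dot_mulVec_eq hB, dot_self_eq hB, h1, Finset.mul_sum]
  exact Finset.sum_le_sum fun i _ => mul_le_mul_of_nonneg_right (h2 i) (sq_nonneg _)

lemma rayleigh_eq_eigen {B : Matrix n n ℝ} [Nonempty n] (hB : B.IsHermitian) (x : n → ℝ)
    (h : x ⬝ᵥ B *ᵥ x = sSup (spectrum ℝ B) * (x ⬝ᵥ x)) :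
    B *ᵥ x = sSup (spectrum ℝ B) • x := by
  obtain ⟨i0, h1, h2⟩ := sSup_spectrum_eq_max hB
  have key : ∀ i, hB.eigenvalues i * ((hB.eigenvectorUnitary : Matrix n n ℝ)ᵀ *ᵥ x) i
      = sSup (spectrum ℝ B) * ((hB.eigenvectorUnitary : Matrix n n ℝ)ᵀ *ᵥ x) i := by
    set y := (hB.eigenvectorUnitary : Matrix n n ℝ)ᵀ *ᵥ x with hy
    set μ := sSup (spectrum ℝ B) with hμ
    have hsum : ∑ i, (μ - hB.eigenvalues i) * (y i)^2 = 0 := by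
      have e1 : x ⬝ᵥ B *ᵥ x = ∑ i, hB.eigenvalues i * (y i)^2 := dot_mulVec_eq hB x
      have e2 : x ⬝ᵥ x = ∑ i, (y i)^2 := dot_self_eq hB x
      rw [e1, e2, Finset.mul_sum] at h
      have e3 : ∑ i, (μ - hB.eigenvalues i) * (y i)^2
          = ∑ i, μ * (y i)^2 - ∑ i, hB.eigenvalues i * (y i)^2 := by
        rw [← Finset.sum_sub_distrib]; exact Finset.sum_congr rfl fun i _ => by ring
      rw [e3, ← h]; ring
    have hterm : ∀ i ∈ Finset.univ, (0:ℝ) ≤ (μ - hB.eigenvalues i) * (y i)^2 := by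
      intro i _
      have : hB.eigenvalues i ≤ μ := by rw [h1]; exact h2 i
      exact mul_nonneg (by linarith) (sq_nonneg _)
    have hz := (Finset.sum_eq_zero_iff_of_nonneg hterm).mp hsum
    intro i
    have hi := hz i (Finset.mem_univ i)
    rcases mul_eq_zero.mp hi with h' | h'
    · have : hB.eigenvalues i = μ := by linarith [sub_eq_zero.mp h']
      rw [this]
    · have : y i = 0 := by
        have := pow_eq_zero_iff (n := 2) (by norm_num) |>.mp h'
        exact this
      rw [this]; ring
  have hD : diagonal hB.eigenvalues *ᵥ ((hB.eigenvectorUnitary : Matrix n n ℝ)ᵀ *ᵥ x)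
      = sSup (spectrum ℝ B) • ((hB.eigenvectorUnitary : Matrix n n ℝ)ᵀ *ᵥ x) := by
    funext i; simpa [Matrix.mulVec_diagonal] using key i
  rw [mulVec_eq_VDy hB, hD, Matrix.mulVec_smul, V_mulVec_y hB]

lemma exists_top_eigenvector {B : Matrix n n ℝ} [Nonempty n] (hB : B.IsHermitian) :
    ∃ v : n → ℝ, v ≠ 0 ∧ B *ᵥ v = sSup (spectrum ℝ B) • v :=
  exists_eigen_of_mem_spectrum (sSup_spectrum_mem hB)


/-- connectivity of a matrix -/
def Conn (B : Matrix n n ℝ) : Prop :=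
  ∀ a b : n, Relation.ReflTransGen (fun a b => B a b ≠ 0) a b

lemma transpose_eq_of_herm {B : Matrix n n ℝ} (hB : B.IsHermitian) : Bᵀ = B := by
  rw [← conjTranspose_eq_transpose_of_trivial]; exact hB

lemma sSup_spectrum_eq_of_posEigen {B : Matrix n n ℝ} [Nonempty n] (hB : B.IsHermitian)
    (hBnn : ∀ i j, 0 ≤ B i j) {v : n → ℝ} (hv : ∀ i, 0 < v i) {μ : ℝ}
    (hμ : B *ᵥ v = μ • v) : sSup (spectrum ℝ B) = μ := by
  have hv0 : v ≠ 0 := fun h => (hv (Classical.arbitrary n)).ne' (congrFun h _)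
  refine IsGreatest.csSup_eq ⟨mem_spectrum_of_eigen hv0 hμ, ?_⟩
  rintro lam hlam
  obtain ⟨w, hw0, hw⟩ := exists_eigen_of_mem_spectrum hlam
  set a : n → ℝ := fun i => |w i| with ha
  have key : ∀ i, |lam| * a i ≤ (B *ᵥ a) i := by
    intro i
    calc |lam| * a i = |lam * w i| := by rw [ha]; simp [abs_mul]
      _ = |(B *ᵥ w) i| := by rw [hw]; simp
      _ = |∑ j, B i j * w j| := rfl
      _ ≤ ∑ j, |B i j * w j| := Finset.abs_sum_le_sum_abs _ _
      _ = ∑ j, B i j * a j := by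
          refine Finset.sum_congr rfl fun j _ => ?_
          rw [abs_mul, abs_of_nonneg (hBnn i j)]
      _ = (B *ᵥ a) i := rfl
  have hdot : v ⬝ᵥ (B *ᵥ a) = μ * (v ⬝ᵥ a) := by
    rw [Matrix.dotProduct_mulVec, ← Matrix.mulVec_transpose, transpose_eq_of_herm hB, hμ,
      smul_dotProduct]
    rfl
  have hle : |lam| * (v ⬝ᵥ a) ≤ μ * (v ⬝ᵥ a) := by
    rw [← hdot]
    have : ∀ i ∈ Finset.univ, v i * (|lam| * a i) ≤ v i * (B *ᵥ a) i :=
      fun i _ => mul_le_mul_of_nonneg_left (key i) (le_of_lt (hv i))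
    calc |lam| * (v ⬝ᵥ a) = ∑ i, v i * (|lam| * a i) := by
          simp [dotProduct, Finset.mul_sum]; exact Finset.sum_congr rfl fun i _ => by ring
      _ ≤ ∑ i, v i * (B *ᵥ a) i := Finset.sum_le_sum this
      _ = v ⬝ᵥ (B *ᵥ a) := rfl
  have hpos : 0 < v ⬝ᵥ a := by
    obtain ⟨j, hj⟩ := Function.ne_iff.mp hw0
    refine Finset.sum_pos' (fun i _ => mul_nonneg (le_of_lt (hv i)) (abs_nonneg _)) ⟨j, Finset.mem_univ j, ?_⟩
    exact mul_pos (hv j) (abs_pos.mpr hj)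
  have habs : |lam| ≤ μ := le_of_mul_le_mul_right (by linarith [hle]) hpos
  exact le_trans (le_abs_self lam) habs

lemma pos_of_superharmonic {B : Matrix n n ℝ} (hBnn : ∀ i j, 0 ≤ B i j)
    (hconn : Conn B) {x y : n → ℝ} (hx : ∀ i, 0 ≤ x i) (hx0 : x ≠ 0)
    (hxy : B *ᵥ x = y) (hy : ∀ a, x a = 0 → y a ≤ 0) : ∀ i, 0 < x i := by
  obtain ⟨j, hj⟩ := Function.ne_iff.mp hx0
  have hjpos : 0 < x j := lt_of_le_of_ne (hx j) (Ne.symm hj)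
  intro i
  rcases eq_or_lt_of_le (hx i) with h0 | h
  swap
  · exact h
  exfalso
  have step : ∀ a b : n, B a b ≠ 0 → x a = 0 → x b = 0 := by
    intro a b hab ha
    have h1 : (0:ℝ) ≤ (B *ᵥ x) a := Finset.sum_nonneg fun c _ => mul_nonneg (hBnn a c) (hx c)
    have h2 : (B *ᵥ x) a ≤ 0 := by rw [hxy]; exact hy a ha
    have h3 : ∑ c, B a c * x c = 0 := le_antisymm h2 h1
    have h4 := (Finset.sum_eq_zero_iff_of_nonneg
      (fun c _ => mul_nonneg (hBnn a c) (hx c))).mp h3 b (Finset.mem_univ b)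
    rcases mul_eq_zero.mp h4 with h' | h'
    · exact absurd h' hab
    · exact h'
  have prop : ∀ b : n, Relation.ReflTransGen (fun a b => B a b ≠ 0) i b → x b = 0 := by
    intro b hab
    induction hab with
    | refl => exact h0.symm
    | tail _ hbc ih => exact step _ _ hbc ih
  exact hjpos.ne' (prop j (hconn i j))

lemma exists_perron {B : Matrix n n ℝ} [Nonempty n] (hB : B.IsHermitian)
    (hBnn : ∀ i j, 0 ≤ B i j) (hconn : Conn B) :
    ∃ v : n → ℝ, (∀ i, 0 < v i) ∧ B *ᵥ v = sSup (spectrum ℝ B) • v := by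
  obtain ⟨v, hv0, hv⟩ := exists_top_eigenvector hB
  set a : n → ℝ := fun i => |v i| with ha
  have ha0 : a ≠ 0 := by
    intro h
    apply hv0
    funext i
    have := congrFun h i
    simpa [ha, abs_eq_zero] using this
  have haa : a ⬝ᵥ a = v ⬝ᵥ v := by
    simp only [dotProduct, ha]
    exact Finset.sum_congr rfl fun i _ => by rw [← abs_mul, abs_mul_self]
  have hge : sSup (spectrum ℝ B) * (a ⬝ᵥ a) ≤ a ⬝ᵥ B *ᵥ a := by
    have hvBv : v ⬝ᵥ B *ᵥ v = sSup (spectrum ℝ B) * (v ⬝ᵥ v) := by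
      rw [hv, dotProduct_smul]; simp [mul_comm]
    rw [haa, ← hvBv]
    have : ∀ i ∈ Finset.univ, v i * (B *ᵥ v) i ≤ a i * (B *ᵥ a) i := by
      intro i _
      have expand : ∀ u : n → ℝ, u i * (B *ᵥ u) i = ∑ j, B i j * (u i * u j) := by
        intro u
        simp only [Matrix.mulVec, dotProduct, Finset.mul_sum]
        exact Finset.sum_congr rfl fun j _ => by ring
      rw [expand v, expand a]
      refine Finset.sum_le_sum fun j _ => mul_le_mul_of_nonneg_left ?_ (hBnn i j)
      calc v i * v j ≤ |v i * v j| := le_abs_self _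
        _ = a i * a j := by rw [ha]; simp [abs_mul]
    exact Finset.sum_le_sum this
  have heq : a ⬝ᵥ B *ᵥ a = sSup (spectrum ℝ B) * (a ⬝ᵥ a) :=
    le_antisymm (rayleigh_le hB a) hge
  have heig := rayleigh_eq_eigen hB a heq
  have hpos := pos_of_superharmonic hBnn hconn (fun i => abs_nonneg (v i)) ha0 heig
    (fun i hi => by rw [Pi.smul_apply, show a i = 0 from hi]; simp)
  exact ⟨a, hpos, heig⟩

lemma resolvent_isUnit {B : Matrix n n ℝ} (hB : B.IsHermitian) {lam : ℝ}
    (h : ∀ μ ∈ spectrum ℝ B, μ < lam) : IsUnit (lam • (1 : Matrix n n ℝ) - B) := by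
  rw [Matrix.isUnit_iff_isUnit_det, isUnit_iff_ne_zero]
  intro hdet
  obtain ⟨w, hw0, hw⟩ := (Matrix.exists_mulVec_eq_zero_iff).mpr hdet
  have heig : B *ᵥ w = lam • w := by
    rw [sub_mulVec, Matrix.smul_mulVec, one_mulVec, sub_eq_zero] at hw
    exact hw.symm
  exact absurd rfl (ne_of_lt (h lam (mem_spectrum_of_eigen hw0 heig)))

lemma resolvent_pos {B : Matrix n n ℝ} [Nonempty n] (hB : B.IsHermitian)
    (hBnn : ∀ i j, 0 ≤ B i j) (hconn : Conn B) {lam : ℝ}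
    (hlam : sSup (spectrum ℝ B) < lam) (t : n) :
    (lam • (1 : Matrix n n ℝ) - B) *ᵥ ((lam • (1 : Matrix n n ℝ) - B)⁻¹ *ᵥ Pi.single t 1)
      = Pi.single t 1 ∧
    ∀ i, 0 < ((lam • (1 : Matrix n n ℝ) - B)⁻¹ *ᵥ Pi.single t 1) i := by
  have hspec : ∀ μ ∈ spectrum ℝ B, μ < lam :=
    fun μ hμ => lt_of_le_of_lt (le_sSup_spectrum hB hμ) hlam
  have hu := resolvent_isUnit hB hspec
  set R := (lam • (1 : Matrix n n ℝ) - B)⁻¹ with hR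
  set x := R *ᵥ Pi.single t 1 with hxdef
  have heq : (lam • (1 : Matrix n n ℝ) - B) *ᵥ x = Pi.single t 1 := by
    rw [hxdef, Matrix.mulVec_mulVec, hR, Matrix.mul_nonsing_inv _
      ((Matrix.isUnit_iff_isUnit_det _).mp hu), Matrix.one_mulVec]
  refine ⟨heq, ?_⟩
  -- nonnegativity via negative part
  set xm : n → ℝ := fun i => max (-(x i)) 0 with hxm
  set xp : n → ℝ := fun i => max (x i) 0 with hxp
  have hdecomp : x = xp - xm := by
    funext i
    rcases le_or_gt 0 (x i) with h | h
    · simp [hxp, hxm, max_eq_left, h, max_eq_right (neg_nonpos_of_nonneg h)]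
    · have := le_of_lt h
      simp [hxp, hxm, max_eq_right this, max_eq_left (neg_nonneg.mpr this)]
  have h0 : xm ⬝ᵥ ((lam • (1 : Matrix n n ℝ) - B) *ᵥ x) = xm t := by
    rw [heq]
    simp [dotProduct, Pi.single_apply, mul_ite]
  have hexp : xm ⬝ᵥ ((lam • (1 : Matrix n n ℝ) - B) *ᵥ x)
      = lam * (xm ⬝ᵥ x) - xm ⬝ᵥ (B *ᵥ x) := by
    rw [sub_mulVec, Matrix.smul_mulVec, one_mulVec, dotProduct_sub,
      dotProduct_smul]
    simp [smul_eq_mul]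
  have e_neg : xm ⬝ᵥ x = -(xm ⬝ᵥ xm) := by
    simp only [dotProduct, ← Finset.sum_neg_distrib]
    refine Finset.sum_congr rfl fun i _ => ?_
    rcases le_or_gt 0 (x i) with h | h
    · simp [hxm, max_eq_right (neg_nonpos_of_nonneg h)]
    · have := le_of_lt h
      rw [hxm]
      simp only [max_eq_left (neg_nonneg.mpr this)]
      ring
  have hsplit : xm ⬝ᵥ (B *ᵥ x) = xm ⬝ᵥ (B *ᵥ xp) - xm ⬝ᵥ (B *ᵥ xm) := by
    rw [hdecomp]
    rw [Matrix.mulVec_sub, dotProduct_sub]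
  have h1 : 0 ≤ xm ⬝ᵥ (B *ᵥ xp) := by
    refine Finset.sum_nonneg fun i _ => mul_nonneg (le_max_right _ _) ?_
    exact Finset.sum_nonneg fun j _ => mul_nonneg (hBnn i j) (le_max_right _ _)
  have h2 : xm ⬝ᵥ B *ᵥ xm ≤ sSup (spectrum ℝ B) * (xm ⬝ᵥ xm) := rayleigh_le hB xm
  have h3 : (0:ℝ) ≤ xm t := le_max_right _ _
  have h4 : 0 ≤ xm ⬝ᵥ xm := Finset.sum_nonneg fun i _ => mul_self_nonneg _
  have hexp2 : xm t = -(lam * (xm ⬝ᵥ xm)) - xm ⬝ᵥ (B *ᵥ xp) + xm ⬝ᵥ (B *ᵥ xm) := by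
    rw [← h0, hexp, hsplit, e_neg]; ring
  have hineq : 0 ≤ (sSup (spectrum ℝ B) - lam) * (xm ⬝ᵥ xm) := by
    have expand : (sSup (spectrum ℝ B) - lam) * (xm ⬝ᵥ xm)
        = sSup (spectrum ℝ B) * (xm ⬝ᵥ xm) - lam * (xm ⬝ᵥ xm) := by ring
    rw [expand]
    linarith [hexp2, h1, h2, h3]
  have hS : xm ⬝ᵥ xm ≤ 0 := by nlinarith [hineq, sub_pos.mpr hlam]
  have hzero : xm ⬝ᵥ xm = 0 := le_antisymm hS h4
  have hxnn : ∀ i, 0 ≤ x i := by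
    intro i
    have hsq := (Finset.sum_eq_zero_iff_of_nonneg
      (fun i _ => mul_self_nonneg (xm i))).mp hzero i (Finset.mem_univ i)
    have hxmi : xm i = 0 := by nlinarith [hsq]
    by_contra hneg
    push_neg at hneg
    have hml : xm i = -(x i) := by rw [hxm]; exact max_eq_left (by linarith)
    linarith [hxmi, hml]
  have hx0 : x ≠ 0 := by
    intro h
    rw [h, Matrix.mulVec_zero] at heq
    have := congrFun heq t
    simp at this
  have h6 : B *ᵥ x = lam • x - Pi.single t 1 := by
    have h7 := heq
    rw [sub_mulVec, Matrix.smul_mulVec, one_mulVec] at h7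
    rw [← h7]; abel
  exact pos_of_superharmonic hBnn hconn hxnn hx0 h6 (fun a ha => by
    simp only [Pi.sub_apply, Pi.smul_apply, ha, smul_eq_mul, mul_zero, zero_sub, neg_nonpos]
    rw [Pi.single_apply]
    split <;> norm_num)

lemma herm_of_symm {B : Matrix n n ℝ} (h : Bᵀ = B) : B.IsHermitian := by
  have h2 : Bᴴ = Bᵀ := conjTranspose_eq_transpose_of_trivial B
  exact h2.trans h

lemma walk_rtg {V' α : Type*} {G : SimpleGraph V'} {r : α → α → Prop} (f : V' → α)
    (hf : ∀ a b, G.Adj a b → r (f a) (f b)) :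
    ∀ {a b : V'}, G.Walk a b → Relation.ReflTransGen r (f a) (f b) := by
  intro a b w
  induction w with
  | nil => exact Relation.ReflTransGen.refl
  | cons h p ih => exact Relation.ReflTransGen.head (hf _ _ h) ih

lemma rtg_symm {α : Type*} {r : α → α → Prop} (hr : ∀ a b, r a b → r b a) {a b : α}
    (h : Relation.ReflTransGen r a b) : Relation.ReflTransGen r b a := by
  induction h with
  | refl => exact Relation.ReflTransGen.refl
  | tail _ hr' ih => exact Relation.ReflTransGen.head (hr _ _ hr') ih

-- row lemmas moved below (need decoratedMatrix)
end DecorAux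


/-- Adjacency between decoration vertices: two vertices `⟨k, j, s⟩` and `⟨k', j', s'⟩`
of the disjoint union of `β` copies of each tree `T_k` are joined according to `A_k`
when they lie in the same copy of the same tree, and are not joined otherwise. -/
def innerAdj {K β : ℕ} {W : Fin K → Type*} [∀ k, DecidableEq (W k)]
    (A : ∀ k, Matrix (W k) (W k) ℝ) :
    (Σ k : Fin K, Fin β × W k) → (Σ k : Fin K, Fin β × W k) → ℝ
  | ⟨k, j, s⟩, ⟨k', j', s'⟩ =>
    if h : k' = k then (if j' = j then A k s (h ▸ s') else 0) else 0

/-- The adjacency matrix `M` of the decorated graph: the graph obtained from a base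
graph on `E` with adjacency matrix `AE` by attaching, to each vertex of `E`, `β`
disjoint copies of each rooted tree `T_k` (with adjacency matrix `A k` and root `t k`)
via an edge to the root of each copy. -/
def decoratedMatrix {E : Type*} [DecidableEq E] {K β : ℕ} {W : Fin K → Type*}
    [∀ k, DecidableEq (W k)]
    (AE : Matrix E E ℝ) (A : ∀ k, Matrix (W k) (W k) ℝ) (t : ∀ k, W k) :
    Matrix (E ⊕ E × Σ k : Fin K, Fin β × W k) (E ⊕ E × Σ k : Fin K, Fin β × W k) ℝ :=
  Matrix.of fun x y =>
    match x, y with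
    | Sum.inl u, Sum.inl v => AE u v
    | Sum.inl u, Sum.inr (v, ⟨k, _j, s⟩) => if u = v ∧ s = t k then 1 else 0
    | Sum.inr (v, ⟨k, _j, s⟩), Sum.inl u => if u = v ∧ s = t k then 1 else 0
    | Sum.inr (u, a), Sum.inr (v, b) => if u = v then innerAdj A a b else 0

namespace DecorAux

variable {E : Type*} [Fintype E] [DecidableEq E] {K β : ℕ}
    {W : Fin K → Type*} [∀ k, Fintype (W k)] [∀ k, DecidableEq (W k)]
    (AE : Matrix E E ℝ) (A : ∀ k, Matrix (W k) (W k) ℝ) (t : ∀ k, W k)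

lemma innerAdj_same (k : Fin K) (j j' : Fin β) (s s' : W k) :
    innerAdj (β := β) A ⟨k, j, s⟩ ⟨k, j', s'⟩ = if j' = j then A k s s' else 0 := by
  simp [innerAdj]

lemma innerAdj_ne {k k' : Fin K} (h : k' ≠ k) (j : Fin β) (j' : Fin β) (s : W k) (s' : W k') :
    innerAdj (β := β) A ⟨k, j, s⟩ ⟨k', j', s'⟩ = 0 := by
  simp [innerAdj, h]

lemma rowI (ψ : (E ⊕ E × Σ k : Fin K, Fin β × W k) → ℝ) (u : E) :
    (decoratedMatrix (β := β) AE A t *ᵥ ψ) (Sum.inl u)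
      = (∑ v, AE u v * ψ (Sum.inl v))
        + ∑ k : Fin K, ∑ j : Fin β, ψ (Sum.inr (u, ⟨k, j, t k⟩)) := by
  simp only [Matrix.mulVec, dotProduct, Fintype.sum_sum_type]
  congr 1
  rw [Fintype.sum_prod_type]
  simp only [← Finset.univ_sigma_univ, Finset.sum_sigma, Fintype.sum_prod_type,
    decoratedMatrix, Matrix.of_apply, ite_mul, one_mul, zero_mul, ite_and,
    Finset.sum_ite_irrel, Finset.sum_ite_eq, Finset.sum_ite_eq', Finset.mem_univ, if_true,
    Finset.sum_const_zero]

lemma rowR (ψ : (E ⊕ E × Σ k : Fin K, Fin β × W k) → ℝ) (u : E) (k : Fin K) (j : Fin β)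
    (s : W k) :
    (decoratedMatrix (β := β) AE A t *ᵥ ψ) (Sum.inr (u, ⟨k, j, s⟩))
      = (if s = t k then ψ (Sum.inl u) else 0)
        + ∑ s', A k s s' * ψ (Sum.inr (u, ⟨k, j, s'⟩)) := by
  simp only [Matrix.mulVec, dotProduct, Fintype.sum_sum_type]
  congr 1
  · -- ∑ v, (if v = u ∧ s = t k then 1 else 0) * ψ (Sum.inl v) = if s = t k then ψ (inl u) else 0
    by_cases hs : s = t k
    · simp [decoratedMatrix, hs, Finset.sum_ite_eq]
    · simp [decoratedMatrix, hs]
  · rw [Fintype.sum_prod_type]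
    simp only [← Finset.univ_sigma_univ, Finset.sum_sigma, Fintype.sum_prod_type,
      decoratedMatrix, Matrix.of_apply, innerAdj, ite_mul, zero_mul, dite_mul,
      Finset.sum_ite_irrel, Finset.sum_dite_irrel, Finset.sum_ite_eq, Finset.sum_ite_eq',
      Finset.sum_dite_eq, Finset.sum_dite_eq', Finset.mem_univ, if_true,
      Finset.sum_const_zero]


end DecorAux

open DecorAux

/-- in the decorated-graph setting, the largest eigenvalue `λ_G` of `M`
strictly exceeds the largest eigenvalue `λ_k` of each tree adjacency matrix `A_k`
(so `λ_G·I - A_k` is invertible), and with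
`α_k := ([(λ_G·I - A_k)⁻¹]_{t_k,t_k})⁻¹` one has `λ_G = λ_E + β·Σ_k α_k⁻¹`, and `λ_G`
equals the largest eigenvalue of `A_k + α_k·e_{t_k} e_{t_k}ᵀ` for every `k`. -/
theorem decorated_graph_eigenvalue_identities
    {E : Type*} [Fintype E] [DecidableEq E] [Nonempty E]
    {K β : ℕ} (hK : 1 ≤ K) (hβ : 1 ≤ β)
    {W : Fin K → Type*} [∀ k, Fintype (W k)] [∀ k, DecidableEq (W k)]
    [∀ k, Nonempty (W k)]
    (EG : SimpleGraph E) [DecidableRel EG.Adj] (hEG : EG.Connected)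
    (TG : ∀ k, SimpleGraph (W k)) [∀ k, DecidableRel (TG k).Adj]
    (hTG : ∀ k, (TG k).IsTree)
    (t : ∀ k, W k)
    (AE : Matrix E E ℝ) (hAE : AE = EG.adjMatrix ℝ)
    (A : ∀ k, Matrix (W k) (W k) ℝ) (hA : ∀ k, A k = (TG k).adjMatrix ℝ)
    (M : Matrix (E ⊕ E × Σ k : Fin K, Fin β × W k)
      (E ⊕ E × Σ k : Fin K, Fin β × W k) ℝ)
    (hM : M = decoratedMatrix AE A t)
    (lamE : ℝ) (hlamE : lamE = sSup (spectrum ℝ AE))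
    (lamG : ℝ) (hlamG : lamG = sSup (spectrum ℝ M))
    (lamT : Fin K → ℝ) (hlamT : ∀ k, lamT k = sSup (spectrum ℝ (A k)))
    (α : Fin K → ℝ)
    (hα : ∀ k, α k = ((lamG • (1 : Matrix (W k) (W k) ℝ) - A k)⁻¹ (t k) (t k))⁻¹) :
    (∀ k, lamT k < lamG) ∧
    (∀ k, IsUnit (lamG • (1 : Matrix (W k) (W k) ℝ) - A k)) ∧
    lamG = lamE + (β : ℝ) * ∑ k, (α k)⁻¹ ∧
    (∀ k, lamG = sSup (spectrum ℝ
      (A k + Matrix.single (t k) (t k) (α k)))) := by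
  classical
  -- basic facts about AE and the A k
  have hAEsymm : ∀ a b, AE a b = AE b a := by
    intro a b; rw [hAE]; simp [SimpleGraph.adjMatrix_apply, EG.adj_comm]
  have hAEherm : AE.IsHermitian := herm_of_symm (by ext a b; exact hAEsymm b a)
  have hAEnn : ∀ a b, 0 ≤ AE a b := by
    intro a b; rw [hAE, SimpleGraph.adjMatrix_apply]; split <;> norm_num
  have hAEconn : Conn AE := by
    intro a b
    obtain ⟨w⟩ := hEG.preconnected a b
    exact walk_rtg id (fun a b hadj => by
      simp only [id]
      rw [hAE, SimpleGraph.adjMatrix_apply, if_pos hadj]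
      norm_num) w
  have hAsymm : ∀ k a b, A k a b = A k b a := by
    intro k a b; rw [hA k]; simp [SimpleGraph.adjMatrix_apply, (TG k).adj_comm]
  have hAherm : ∀ k, (A k).IsHermitian := fun k => herm_of_symm (by ext a b; exact hAsymm k b a)
  have hAnn : ∀ k, ∀ a b, 0 ≤ A k a b := by
    intro k a b; rw [hA k, SimpleGraph.adjMatrix_apply]; split <;> norm_num
  have hAconn : ∀ k, Conn (A k) := by
    intro k a b
    obtain ⟨w⟩ := (hTG k).isConnected.preconnected a b
    exact walk_rtg id (fun a b hadj => by
      simp only [id]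
      rw [hA k, SimpleGraph.adjMatrix_apply, if_pos hadj]
      norm_num) w
  -- symmetry of inner adjacency
  have hinner_symm : ∀ (a b : Σ k : Fin K, Fin β × W k),
      innerAdj (β := β) A a b = innerAdj (β := β) A b a := by
    rintro ⟨k, j, s⟩ ⟨k', j', s'⟩
    by_cases h : k' = k
    · subst h
      rw [innerAdj_same, innerAdj_same]
      by_cases hj : j' = j
      · subst hj; simp [hAsymm]
      · rw [if_neg hj, if_neg (Ne.symm hj)]
    · rw [innerAdj_ne A h, innerAdj_ne A (Ne.symm h)]
  have hinner_nn : ∀ (a b : Σ k : Fin K, Fin β × W k), 0 ≤ innerAdj (β := β) A a b := by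
    rintro ⟨k, j, s⟩ ⟨k', j', s'⟩
    by_cases h : k' = k
    · subst h
      rw [innerAdj_same]
      by_cases hj : j' = j
      · rw [if_pos hj]; exact hAnn _ _ _
      · rw [if_neg hj]
    · rw [innerAdj_ne A h]

  -- symmetry and nonnegativity of M
  have hMsymm : ∀ x y, M x y = M y x := by
    rintro (u | ⟨u, ⟨k, j, s⟩⟩) (v | ⟨v, ⟨k', j', s'⟩⟩)
    · rw [hM]; exact hAEsymm u v
    · rw [hM]; rfl
    · rw [hM]; rfl
    · rw [hM]
      show (if u = v then innerAdj (β := β) A ⟨k, j, s⟩ ⟨k', j', s'⟩ else 0)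
          = (if v = u then innerAdj (β := β) A ⟨k', j', s'⟩ ⟨k, j, s⟩ else 0)
      by_cases huv : u = v
      · subst huv; rw [if_pos rfl, if_pos rfl]; exact hinner_symm _ _
      · rw [if_neg huv, if_neg (Ne.symm huv)]
  have hMherm : M.IsHermitian := herm_of_symm (by ext x y; exact hMsymm y x)
  have hMnn : ∀ x y, 0 ≤ M x y := by
    rintro (u | ⟨u, ⟨k, j, s⟩⟩) (v | ⟨v, ⟨k', j', s'⟩⟩)
    · rw [hM]; exact hAEnn u v
    · rw [hM]
      show (0:ℝ) ≤ if u = v ∧ s' = t k' then 1 else 0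
      split <;> norm_num
    · rw [hM]
      show (0:ℝ) ≤ if v = u ∧ s = t k then 1 else 0
      split <;> norm_num
    · rw [hM]
      show (0:ℝ) ≤ if u = v then innerAdj (β := β) A ⟨k, j, s⟩ ⟨k', j', s'⟩ else 0
      split
      · exact hinner_nn _ _
      · exact le_rfl
  -- connectivity of M
  have hMconn : Conn M := by
    have hbase : ∀ u v : E, Relation.ReflTransGen (fun a b => M a b ≠ 0)
        (Sum.inl u) (Sum.inl v) := by
      intro u v
      obtain ⟨w⟩ := hEG.preconnected u v
      exact walk_rtg Sum.inl (fun a b hadj => by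
        show M (Sum.inl a) (Sum.inl b) ≠ 0
        rw [hM]
        show AE a b ≠ 0
        rw [hAE, SimpleGraph.adjMatrix_apply, if_pos hadj]; norm_num) w
    have htree : ∀ (u : E) (k : Fin K) (j : Fin β) (s : W k),
        Relation.ReflTransGen (fun a b => M a b ≠ 0)
          (Sum.inr (u, ⟨k, j, s⟩)) (Sum.inl u) := by
      intro u k j s
      obtain ⟨w⟩ := (hTG k).isConnected.preconnected s (t k)
      have h1 : Relation.ReflTransGen (fun a b => M a b ≠ 0)
          (Sum.inr (u, ⟨k, j, s⟩)) (Sum.inr (u, ⟨k, j, t k⟩)) :=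
        walk_rtg (fun s' => (Sum.inr (u, ⟨k, j, s'⟩) : E ⊕ E × Σ k : Fin K, Fin β × W k))
          (fun a b hadj => by
            show M (Sum.inr (u, ⟨k, j, a⟩)) (Sum.inr (u, ⟨k, j, b⟩)) ≠ 0
            rw [hM]
            show (if u = u then innerAdj (β := β) A ⟨k, j, a⟩ ⟨k, j, b⟩ else 0) ≠ 0
            rw [if_pos rfl, innerAdj_same, if_pos rfl, hA k, SimpleGraph.adjMatrix_apply,
              if_pos hadj]
            norm_num) w
      refine h1.trans (Relation.ReflTransGen.single ?_)
      show M (Sum.inr (u, ⟨k, j, t k⟩)) (Sum.inl u) ≠ 0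
      rw [hM]
      show (if u = u ∧ t k = t k then (1:ℝ) else 0) ≠ 0
      rw [if_pos ⟨rfl, rfl⟩]; norm_num
    have hsym : ∀ a b, M a b ≠ 0 → M b a ≠ 0 := fun a b h => by rwa [hMsymm b a]
    rintro (u | ⟨u, ⟨k, j, s⟩⟩) (v | ⟨v, ⟨k', j', s'⟩⟩)
    · exact hbase u v
    · exact (hbase u v).trans (rtg_symm hsym (htree v k' j' s'))
    · exact (htree u k j s).trans (hbase u v)
    · exact ((htree u k j s).trans (hbase u v)).trans (rtg_symm hsym (htree v k' j' s'))
  -- Perron eigenvector of M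
  obtain ⟨Ψ, hΨpos, hΨeig⟩ := exists_perron hMherm hMnn hMconn
  rw [← hlamG] at hΨeig
  -- Perron vectors of the trees
  have hφex : ∀ k, ∃ φ : W k → ℝ, (∀ i, 0 < φ i) ∧ A k *ᵥ φ = lamT k • φ := by
    intro k
    obtain ⟨φ, h1, h2⟩ := exists_perron (hAherm k) (hAnn k) (hAconn k)
    exact ⟨φ, h1, by rwa [← hlamT k] at h2⟩
  choose φ hφpos hφeig using hφex
  have hdotA : ∀ (k) (x : W k → ℝ), φ k ⬝ᵥ (A k *ᵥ x) = lamT k * (φ k ⬝ᵥ x) := by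
    intro k x
    rw [Matrix.dotProduct_mulVec, ← Matrix.mulVec_transpose, transpose_eq_of_herm (hAherm k),
      hφeig k, smul_dotProduct, smul_eq_mul]
  -- the local eigenvalue equation on each tree copy
  have hxeq : ∀ (u : E) (k : Fin K) (j : Fin β) (s : W k),
      (if s = t k then Ψ (Sum.inl u) else 0)
        + ∑ s', A k s s' * Ψ (Sum.inr (u, ⟨k, j, s'⟩))
        = lamG * Ψ (Sum.inr (u, ⟨k, j, s⟩)) := by
    intro u k j s
    have h1 : (M *ᵥ Ψ) (Sum.inr (u, ⟨k, j, s⟩))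
        = (if s = t k then Ψ (Sum.inl u) else 0)
          + ∑ s', A k s s' * Ψ (Sum.inr (u, ⟨k, j, s'⟩)) := by
      rw [hM]; exact rowR AE A t Ψ u k j s
    have h2 : (M *ᵥ Ψ) (Sum.inr (u, ⟨k, j, s⟩)) = lamG * Ψ (Sum.inr (u, ⟨k, j, s⟩)) := by
      rw [hΨeig]; simp
    rw [h1] at h2; exact h2
  -- λ_T k < λ_G
  have hlt : ∀ k, lamT k < lamG := by
    intro k
    have u0 : E := Classical.arbitrary E
    have j0 : Fin β := ⟨0, hβ⟩
    set x : W k → ℝ := fun s => Ψ (Sum.inr (u0, ⟨k, j0, s⟩)) with hxdef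
    have l1 : ∑ s, φ k s * ((if s = t k then Ψ (Sum.inl u0) else 0) + ∑ s', A k s s' * x s')
        = (∑ s, φ k s * (if s = t k then Ψ (Sum.inl u0) else 0))
          + ∑ s, φ k s * ∑ s', A k s s' * x s' := by
      rw [← Finset.sum_add_distrib]; exact Finset.sum_congr rfl fun s _ => by ring
    have l2 : ∑ s, φ k s * (if s = t k then Ψ (Sum.inl u0) else 0)
        = φ k (t k) * Ψ (Sum.inl u0) := by
      simp [mul_ite, mul_zero, Finset.sum_ite_eq']
    have l3 : ∑ s, φ k s * ∑ s', A k s s' * x s' = φ k ⬝ᵥ (A k *ᵥ x) := rfl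
    have l4 : ∑ s, φ k s * (lamG * x s) = lamG * (φ k ⬝ᵥ x) := by
      rw [dotProduct, Finset.mul_sum]
      exact Finset.sum_congr rfl fun s _ => by ring
    have e2 : ∑ s, φ k s * ((if s = t k then Ψ (Sum.inl u0) else 0) + ∑ s', A k s s' * x s')
        = ∑ s, φ k s * (lamG * x s) :=
      Finset.sum_congr rfl fun s _ => by rw [hxeq u0 k j0 s]
    have e3 : φ k (t k) * Ψ (Sum.inl u0) + lamT k * (φ k ⬝ᵥ x) = lamG * (φ k ⬝ᵥ x) := by
      rw [← hdotA k x, ← l2, ← l3, ← l1, e2, l4]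
    have hdpos : 0 < φ k ⬝ᵥ x :=
      Finset.sum_pos (fun s _ => mul_pos (hφpos k s) (hΨpos _)) Finset.univ_nonempty
    have hrpos : 0 < φ k (t k) * Ψ (Sum.inl u0) := mul_pos (hφpos k _) (hΨpos _)
    nlinarith [e3, hdpos, hrpos]
  -- invertibility
  have hsup_lt : ∀ k, sSup (spectrum ℝ (A k)) < lamG := fun k => by
    rw [← hlamT k]; exact hlt k
  have hspecA : ∀ k, ∀ μ ∈ spectrum ℝ (A k), μ < lamG := fun k μ h =>
    lt_of_le_of_lt (le_sSup_spectrum (hAherm k) h) (hsup_lt k)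
  have hunit : ∀ k, IsUnit (lamG • (1 : Matrix (W k) (W k) ℝ) - A k) := fun k =>
    resolvent_isUnit (hAherm k) (hspecA k)
  -- the resolvent vectors
  set y : ∀ k, W k → ℝ :=
    fun k => (lamG • (1 : Matrix (W k) (W k) ℝ) - A k)⁻¹ *ᵥ Pi.single (t k) 1 with hydef
  have hyk : ∀ k, (lamG • (1 : Matrix (W k) (W k) ℝ) - A k) *ᵥ y k = Pi.single (t k) 1 ∧
      ∀ i, 0 < y k i := fun k =>
    resolvent_pos (hAherm k) (hAnn k) (hAconn k) (hsup_lt k) (t k)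
  have hgpos : ∀ k, 0 < y k (t k) := fun k => (hyk k).2 _
  have hαval : ∀ k, α k = (y k (t k))⁻¹ := by
    intro k
    rw [hα k]
    congr 1
    rw [hydef]
    simp [Matrix.mulVec_single]
  have hαinv : ∀ k, (α k)⁻¹ = y k (t k) := fun k => by rw [hαval k, inv_inv]
  -- identify the tree copies of Ψ
  have hcopy : ∀ (u : E) (k : Fin K) (j : Fin β) (s : W k),
      Ψ (Sum.inr (u, ⟨k, j, s⟩)) = Ψ (Sum.inl u) * y k s := by
    intro u k j
    have hxeq2 : (lamG • (1 : Matrix (W k) (W k) ℝ) - A k)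
          *ᵥ (fun s => Ψ (Sum.inr (u, ⟨k, j, s⟩)))
        = Ψ (Sum.inl u) • (Pi.single (t k) 1 : W k → ℝ) := by
      funext s
      have h1 := hxeq u k j s
      have hAx : ((A k) *ᵥ (fun s'' => Ψ (Sum.inr (u, ⟨k, j, s''⟩)))) s
          = ∑ s', A k s s' * Ψ (Sum.inr (u, ⟨k, j, s'⟩)) := rfl
      rw [Matrix.sub_mulVec, Matrix.smul_mulVec, Matrix.one_mulVec]
      simp only [Pi.sub_apply, Pi.smul_apply, smul_eq_mul, Pi.single_apply]
      by_cases hs : s = t k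
      · rw [if_pos hs] at h1
        rw [if_pos hs, mul_one]
        linarith [h1, hAx]
      · rw [if_neg hs] at h1
        rw [if_neg hs, mul_zero]
        linarith [h1, hAx]
    have hxy : (fun s => Ψ (Sum.inr (u, ⟨k, j, s⟩))) = Ψ (Sum.inl u) • y k := by
      have hdet := (Matrix.isUnit_iff_isUnit_det _).mp (hunit k)
      calc (fun s => Ψ (Sum.inr (u, ⟨k, j, s⟩)))
          = ((lamG • (1 : Matrix (W k) (W k) ℝ) - A k)⁻¹
              * (lamG • (1 : Matrix (W k) (W k) ℝ) - A k))
              *ᵥ (fun s => Ψ (Sum.inr (u, ⟨k, j, s⟩))) := by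
            rw [Matrix.nonsing_inv_mul _ hdet, Matrix.one_mulVec]
        _ = (lamG • (1 : Matrix (W k) (W k) ℝ) - A k)⁻¹
              *ᵥ ((lamG • (1 : Matrix (W k) (W k) ℝ) - A k)
                *ᵥ (fun s => Ψ (Sum.inr (u, ⟨k, j, s⟩)))) := by
            rw [Matrix.mulVec_mulVec]
        _ = (lamG • (1 : Matrix (W k) (W k) ℝ) - A k)⁻¹
              *ᵥ (Ψ (Sum.inl u) • (Pi.single (t k) 1 : W k → ℝ)) := by rw [hxeq2]
        _ = Ψ (Sum.inl u) • y k := by rw [Matrix.mulVec_smul, hydef]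
    intro s
    have h7 := congrFun hxy s
    simpa using h7
  -- the base equation
  set ψE : E → ℝ := fun u => Ψ (Sum.inl u) with hψEdef
  set gsum : ℝ := ∑ k, y k (t k) with hgsum
  have hbase : AE *ᵥ ψE = (lamG - (β : ℝ) * gsum) • ψE := by
    funext u
    have h1 : (M *ᵥ Ψ) (Sum.inl u)
        = (∑ v, AE u v * Ψ (Sum.inl v))
          + ∑ k : Fin K, ∑ j : Fin β, Ψ (Sum.inr (u, ⟨k, j, t k⟩)) := by
      rw [hM]; exact rowI AE A t Ψ u
    have h2 : (M *ᵥ Ψ) (Sum.inl u) = lamG * ψE u := by rw [hΨeig]; simp [hψEdef]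
    have h3 : ∑ k : Fin K, ∑ j : Fin β, Ψ (Sum.inr (u, ⟨k, j, t k⟩))
        = (β : ℝ) * gsum * ψE u := by
      have e1 : ∀ k : Fin K, ∑ j : Fin β, Ψ (Sum.inr (u, ⟨k, j, t k⟩))
          = (β : ℝ) * (ψE u * y k (t k)) := by
        intro k
        have e0 : ∀ j : Fin β, Ψ (Sum.inr (u, ⟨k, j, t k⟩)) = ψE u * y k (t k) :=
          fun j => hcopy u k j (t k)
        rw [Finset.sum_congr rfl fun j _ => e0 j, Finset.sum_const, Finset.card_univ,
          Fintype.card_fin, nsmul_eq_mul]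
      rw [Finset.sum_congr rfl fun k _ => e1 k, ← Finset.mul_sum, hgsum]
      have e2 : ∑ k : Fin K, ψE u * y k (t k) = ψE u * ∑ k, y k (t k) := by
        rw [Finset.mul_sum]
      rw [e2]; ring
    have h4 : (AE *ᵥ ψE) u = ∑ v, AE u v * ψE v := rfl
    have h5 : ∑ v, AE u v * Ψ (Sum.inl v) = (AE *ᵥ ψE) u := by rw [h4]
    rw [h5, h3, h2] at h1
    simp only [Pi.smul_apply, smul_eq_mul]
    linarith [h1]
  have hψEpos : ∀ u, 0 < ψE u := fun u => hΨpos _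
  have hlamEval : lamE = lamG - (β : ℝ) * gsum := by
    rw [hlamE]
    exact sSup_spectrum_eq_of_posEigen hAEherm hAEnn hψEpos hbase
  -- assemble
  refine ⟨hlt, hunit, ?_, ?_⟩
  · have : ∑ k, (α k)⁻¹ = gsum := by
      rw [hgsum]; exact Finset.sum_congr rfl fun k _ => hαinv k
    rw [this, hlamEval]; ring
  · intro k
    have hBherm : (A k + Matrix.single (t k) (t k) (α k)).IsHermitian := by
      apply herm_of_symm
      rw [Matrix.transpose_add, transpose_eq_of_herm (hAherm k)]
      congr 1
      ext a b
      simp only [Matrix.transpose_apply, Matrix.single, Matrix.of_apply]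
      by_cases h1 : t k = a <;> by_cases h2 : t k = b <;> simp [h1, h2]
    have hαpos : 0 < α k := by rw [hαval k]; exact inv_pos.mpr (hgpos k)
    have hBnn : ∀ a b, 0 ≤ (A k + Matrix.single (t k) (t k) (α k)) a b := by
      intro a b
      apply add_nonneg (hAnn k a b)
      simp only [Matrix.single, Matrix.of_apply]
      split
      · exact le_of_lt hαpos
      · exact le_rfl
    have hstd : Matrix.single (t k) (t k) (α k) *ᵥ y k = Pi.single (t k) 1 := by
      funext i
      have : (Matrix.single (t k) (t k) (α k) *ᵥ y k) i
          = ∑ j, (if t k = i ∧ t k = j then α k else 0) * y k j := rfl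
      rw [this]
      simp only [ite_and, ite_mul, zero_mul, Finset.sum_ite_irrel, Finset.sum_ite_eq,
        Finset.mem_univ, if_true, Finset.sum_const_zero, Pi.single_apply]
      by_cases h1 : t k = i
      · rw [if_pos h1, if_pos h1.symm]
        rw [hαval k]
        field_simp
        exact div_self (hgpos k).ne'
      · rw [if_neg h1, if_neg (fun h => h1 h.symm)]
    have hAy : A k *ᵥ y k = lamG • y k - Pi.single (t k) 1 := by
      have := (hyk k).1
      rw [Matrix.sub_mulVec, Matrix.smul_mulVec, Matrix.one_mulVec] at this
      rw [← this]; abel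
    have hBeig : (A k + Matrix.single (t k) (t k) (α k)) *ᵥ y k = lamG • y k := by
      rw [Matrix.add_mulVec, hAy, hstd]; abel
    exact (sSup_spectrum_eq_of_posEigen hBherm hBnn (hyk k).2 hBeig).symm
end

section
/- In the decorated-graph setting below, assume the largest eigenvalue λ_G of M is strictly greater than the largest eigenvalue λ_k of A_k for every k ∈ {1,…,K}. Then the vector ψ_G indexed by V defined by ψ_G(u) := ψ_E(u) for u ∈ E, and ψ_G(v,k,j,s) := ψ_E(v)·[(λ_G·I − A_k)⁻¹ e_{t_k}](s) for each decoration vertex (v,k,j,s), has all entries strictly positive, its restriction to E equals ψ_E, and it satisfies M·ψ_G = λ_G·ψ_G; in particular, the restriction of any eigenvector of M for λ_G to E is proportional to ψ_E. -/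
open Matrix

open Pointwise

set_option linter.unusedSectionVars false
set_option linter.unusedVariables false
set_option linter.unusedTactic false
set_option maxHeartbeats 1000000


section SpecAux
variable {n : Type*} [Fintype n] [DecidableEq n]

lemma spec_finite (B : Matrix n n ℝ) (hB : B.IsHermitian) : (spectrum ℝ B).Finite := by
  rw [hB.spectrum_real_eq_range_eigenvalues]; exact Set.finite_range _

lemma spec_nonempty [Nonempty n] (B : Matrix n n ℝ) (hB : B.IsHermitian) :
    (spectrum ℝ B).Nonempty := by
  rw [hB.spectrum_real_eq_range_eigenvalues]; exact Set.range_nonempty _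

lemma le_sSup_spec [Nonempty n] {B : Matrix n n ℝ} (hB : B.IsHermitian) {μ : ℝ}
    (h : μ ∈ spectrum ℝ B) : μ ≤ sSup (spectrum ℝ B) :=
  le_csSup ((spec_finite B hB).bddAbove) h

lemma sSup_spec_mem [Nonempty n] {B : Matrix n n ℝ} (hB : B.IsHermitian) :
    sSup (spectrum ℝ B) ∈ spectrum ℝ B :=
  (spec_nonempty B hB).csSup_mem (spec_finite B hB)

lemma shift_isHermitian {B : Matrix n n ℝ} (hB : B.IsHermitian) (lam : ℝ) :
    (lam • (1 : Matrix n n ℝ) - B).IsHermitian := by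
  unfold Matrix.IsHermitian
  rw [conjTranspose_sub, conjTranspose_smul, conjTranspose_one, hB.eq, star_trivial]

lemma spec_shift (B : Matrix n n ℝ) (lam : ℝ) :
    spectrum ℝ (lam • (1 : Matrix n n ℝ) - B) = ({lam} : Set ℝ) - spectrum ℝ B := by
  rw [spectrum.singleton_sub_eq, Algebra.algebraMap_eq_smul_one]

lemma shift_posSemidef {B : Matrix n n ℝ} (hB : B.IsHermitian) {lam : ℝ}
    (h : ∀ μ ∈ spectrum ℝ B, μ ≤ lam) :
    (lam • (1 : Matrix n n ℝ) - B).PosSemidef := by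
  have hC := shift_isHermitian hB lam
  refine hC.posSemidef_iff_eigenvalues_nonneg.mpr fun i => (?_ : (0:ℝ) ≤ hC.eigenvalues i)
  have hmem := hC.eigenvalues_mem_spectrum_real i
  rw [spec_shift] at hmem
  rcases Set.mem_sub.mp hmem with ⟨a, ha, b, hb, hab⟩
  rcases Set.mem_singleton_iff.mp ha with rfl
  have := h b hb
  linarith [hab]

lemma shift_isUnit {B : Matrix n n ℝ} (hB : B.IsHermitian) {lam : ℝ}
    (h : ∀ μ ∈ spectrum ℝ B, μ < lam) :
    IsUnit (lam • (1 : Matrix n n ℝ) - B) := by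
  have : lam ∉ spectrum ℝ B := fun hmem => lt_irrefl _ (h _ hmem)
  have := spectrum.notMem_iff.mp this
  rwa [Algebra.algebraMap_eq_smul_one] at this

/-- a nonzero eigenvector gives spectrum membership, and conversely -/
lemma mem_spec_iff_eigenvector (B : Matrix n n ℝ) (lam : ℝ) :
    lam ∈ spectrum ℝ B ↔ ∃ v ≠ 0, B *ᵥ v = lam • v := by
  rw [spectrum.mem_iff, Algebra.algebraMap_eq_smul_one,
    Matrix.isUnit_iff_isUnit_det, isUnit_iff_ne_zero, not_not,
    ← Matrix.exists_mulVec_eq_zero_iff]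
  constructor <;> rintro ⟨v, hv, h⟩ <;> refine ⟨v, hv, ?_⟩
  · have := h
    rw [sub_mulVec, smul_mulVec, one_mulVec, sub_eq_zero] at this
    exact this.symm
  · rw [sub_mulVec, smul_mulVec, one_mulVec, h, sub_self]

lemma diag_le_sSup_spec [Nonempty n] {B : Matrix n n ℝ} (hB : B.IsHermitian) (s : n) :
    B s s ≤ sSup (spectrum ℝ B) := by
  set lam := sSup (spectrum ℝ B)
  have hP := shift_posSemidef hB (fun μ hμ => le_sSup_spec hB hμ)
  have h2 := hP.dotProduct_mulVec_nonneg (Pi.single s 1)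
  have : dotProduct (star (Pi.single s (1:ℝ))) ((lam • (1 : Matrix n n ℝ) - B) *ᵥ Pi.single s 1)
      = lam - B s s := by
    simp [sub_mulVec, smul_mulVec, one_mulVec, dotProduct_sub, dotProduct, Pi.single_apply, mulVec_single]
  rw [this] at h2
  linarith

end SpecAux



section Prop0
variable {V : Type*} [Fintype V] [DecidableEq V] {G : SimpleGraph V} [DecidableRel G.Adj]

/-- zero propagation along walks -/
lemma zero_propagates {w : V → ℝ} (hw : ∀ v, 0 ≤ w v)
    (h0 : ∀ v, w v = 0 → (G.adjMatrix ℝ *ᵥ w) v ≤ 0)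
    {u v : V} (hu : w u = 0) (huv : G.Reachable u v) : w v = 0 := by
  obtain ⟨p⟩ := huv
  induction p with
  | nil => exact hu
  | cons hadj p ih =>
    rename_i a b c
    apply ih
    have h1 := h0 a hu
    rw [SimpleGraph.adjMatrix_mulVec_apply] at h1
    have h2 : ∀ x ∈ G.neighborFinset a, 0 ≤ w x := fun x _ => hw x
    have h3 : ∑ x ∈ G.neighborFinset a, w x = 0 :=
      le_antisymm h1 (Finset.sum_nonneg h2)
    have := (Finset.sum_eq_zero_iff_of_nonneg h2).mp h3
    exact this b (by simpa [SimpleGraph.mem_neighborFinset] using hadj)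

lemma pos_of_connected {w : V → ℝ} (hG : G.Connected) (hw : ∀ v, 0 ≤ w v)
    (h0 : ∀ v, w v = 0 → (G.adjMatrix ℝ *ᵥ w) v ≤ 0)
    {v0 : V} (hv0 : 0 < w v0) (v : V) : 0 < w v := by
  rcases lt_or_eq_of_le (hw v) with h | h
  · exact h
  · exact absurd (zero_propagates hw h0 h.symm (hG.preconnected v v0)) (ne_of_gt hv0)

lemma eq_zero_of_connected {w : V → ℝ} (hG : G.Connected) (hw : ∀ v, 0 ≤ w v)
    (h0 : ∀ v, w v = 0 → (G.adjMatrix ℝ *ᵥ w) v ≤ 0)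
    {v0 : V} (hv0 : w v0 = 0) (v : V) : w v = 0 :=
  zero_propagates hw h0 hv0 (hG.preconnected v0 v)

end Prop0



section Res
variable {V : Type*} [Fintype V] [DecidableEq V] (G : SimpleGraph V) [DecidableRel G.Adj]

lemma adj_isHermitian : (G.adjMatrix ℝ).IsHermitian := by
  unfold Matrix.IsHermitian
  ext i j
  simp [Matrix.conjTranspose_apply, SimpleGraph.adjMatrix_apply, SimpleGraph.adj_comm]

lemma dot_adj_abs_le (x : V → ℝ) :
    x ⬝ᵥ (G.adjMatrix ℝ *ᵥ x) ≤ (fun v => |x v|) ⬝ᵥ (G.adjMatrix ℝ *ᵥ fun v => |x v|) := by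
  simp only [dotProduct, mulVec]
  refine Finset.sum_le_sum fun i _ => ?_
  rw [Finset.mul_sum, Finset.mul_sum]
  refine Finset.sum_le_sum fun j _ => ?_
  have hA : (0:ℝ) ≤ G.adjMatrix ℝ i j := by simp [SimpleGraph.adjMatrix_apply]; split <;> norm_num
  have : x i * x j ≤ |x i| * |x j| := by
    calc x i * x j ≤ |x i * x j| := le_abs_self _
    _ = |x i| * |x j| := abs_mul _ _
  calc x i * (G.adjMatrix ℝ i j * x j) = G.adjMatrix ℝ i j * (x i * x j) := by ring
  _ ≤ G.adjMatrix ℝ i j * (|x i| * |x j|) := by nlinarith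
  _ = |x i| * (G.adjMatrix ℝ i j * |x j|) := by ring

lemma resolvent_pos (hG : G.Connected) (t : V) {lam : ℝ}
    (hlam : ∀ μ ∈ spectrum ℝ (G.adjMatrix ℝ), μ < lam) (hlam0 : 0 < lam) (s : V) :
    0 < (((lam • (1 : Matrix V V ℝ) - G.adjMatrix ℝ))⁻¹ *ᵥ Pi.single t 1) s := by
  set A := G.adjMatrix ℝ with hA
  set B := lam • (1 : Matrix V V ℝ) - A with hBdef
  have hAH : A.IsHermitian := adj_isHermitian G
  have hU : IsUnit B := shift_isUnit hAH hlam
  have hUdet : IsUnit B.det := (Matrix.isUnit_iff_isUnit_det B).mp hU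
  set g := B⁻¹ *ᵥ Pi.single t 1 with hgdef
  have hBg : B *ᵥ g = Pi.single t 1 := by
    rw [hgdef, Matrix.mulVec_mulVec, Matrix.mul_nonsing_inv _ hUdet, Matrix.one_mulVec]
  have hinj : ∀ x : V → ℝ, B *ᵥ x = 0 → x = 0 := by
    intro x hx
    have : B⁻¹ *ᵥ (B *ᵥ x) = x := by
      rw [Matrix.mulVec_mulVec, Matrix.nonsing_inv_mul _ hUdet, Matrix.one_mulVec]
    rw [hx, Matrix.mulVec_zero] at this
    exact this.symm
  have hPSD : B.PosSemidef := shift_posSemidef hAH (fun μ hμ => (hlam μ hμ).le)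
  -- key equation : lam • g - A *ᵥ g = e_t
  have heq : ∀ v, lam * g v - (A *ᵥ g) v = (Pi.single t 1 : V → ℝ) v := by
    intro v
    have := congrFun hBg v
    simpa [hBdef, Matrix.sub_mulVec, Matrix.smul_mulVec, Matrix.one_mulVec] using this
  -- nonnegativity of g
  set w := fun v => |g v| with hwdef
  have hsym : ∀ x y : V → ℝ, x ⬝ᵥ (B *ᵥ y) = y ⬝ᵥ (B *ᵥ x) := by
    intro x y
    rw [Matrix.dotProduct_mulVec, ← Matrix.mulVec_transpose]
    have : Bᵀ = B := by
      have := hPSD.1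
      rwa [Matrix.IsHermitian, Matrix.conjTranspose_eq_transpose_of_trivial] at this
    rw [this, dotProduct_comm]
  have habs : ∀ v, g v ≤ w v := fun v => le_abs_self _
  have hQ : (w - g) ⬝ᵥ (B *ᵥ (w - g)) ≤ 0 := by
    have e1 : (w - g) ⬝ᵥ (B *ᵥ (w - g))
        = w ⬝ᵥ (B *ᵥ w) - w ⬝ᵥ (B *ᵥ g) - g ⬝ᵥ (B *ᵥ w) + g ⬝ᵥ (B *ᵥ g) := by
      rw [Matrix.mulVec_sub, sub_dotProduct, dotProduct_sub, dotProduct_sub]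
      ring
    have e2 : g ⬝ᵥ (B *ᵥ w) = w ⬝ᵥ (B *ᵥ g) := hsym g w
    have e3 : w ⬝ᵥ (B *ᵥ g) = w t := by rw [hBg]; simp [dotProduct, Pi.single_apply]
    have e4 : g ⬝ᵥ (B *ᵥ g) = g t := by rw [hBg]; simp [dotProduct, Pi.single_apply]
    have e5 : w ⬝ᵥ (B *ᵥ w) ≤ g ⬝ᵥ (B *ᵥ g) := by
      have h1 : w ⬝ᵥ w = g ⬝ᵥ g := by
        simp only [dotProduct, hwdef]
        exact Finset.sum_congr rfl fun i _ => by rw [← abs_mul, abs_mul_self]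
      have h2 : g ⬝ᵥ (A *ᵥ g) ≤ w ⬝ᵥ (A *ᵥ w) := dot_adj_abs_le G g
      have hb : ∀ x : V → ℝ, x ⬝ᵥ (B *ᵥ x) = lam * (x ⬝ᵥ x) - x ⬝ᵥ (A *ᵥ x) := by
        intro x
        rw [hBdef, Matrix.sub_mulVec, dotProduct_sub, Matrix.smul_mulVec,
          Matrix.one_mulVec, dotProduct_smul]
        simp [smul_eq_mul]
      rw [hb w, hb g, h1]
      linarith
    have e6 : g t ≤ w t := habs t
    rw [e1, e2, e3, e4]
    linarith
  have hQ0 : (w - g) ⬝ᵥ (B *ᵥ (w - g)) = 0 := le_antisymm hQ (by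
    have := hPSD.dotProduct_mulVec_nonneg (w - g)
    simpa using this)
  have hwg : w - g = 0 := by
    apply hinj
    have hstar : star (w - g) = w - g := by
      funext v; simp
    have := (hPSD.dotProduct_mulVec_zero_iff (w - g)).mp (by rw [hstar]; exact hQ0)
    exact this
  have hgnn : ∀ v, 0 ≤ g v := by
    intro v
    have : w v = g v := by
      have := congrFun hwg v
      simpa [sub_eq_zero] using this
    rw [← this]; exact abs_nonneg _
  -- g t > 0
  have hAg_nn : ∀ v, 0 ≤ (A *ᵥ g) v := by
    intro v
    simp only [Matrix.mulVec, dotProduct]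
    refine Finset.sum_nonneg fun j _ => mul_nonneg ?_ (hgnn j)
    simp [hA, SimpleGraph.adjMatrix_apply]; split <;> norm_num
  have hgt : 0 < g t := by
    have h1 := heq t
    simp only [Pi.single_apply] at h1
    norm_num at h1
    have := hAg_nn t
    nlinarith
  -- propagate positivity
  refine pos_of_connected (G := G) hG hgnn ?_ hgt s
  intro v hv
  have h1 := heq v
  rw [hv, mul_zero] at h1
  have : (A *ᵥ g) v = -((Pi.single t 1 : V → ℝ) v) := by linarith
  rw [this]
  simp only [Pi.single_apply, neg_le, neg_zero]
  split <;> norm_num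
end Res


section Unique
variable {V : Type*} [Fintype V] [DecidableEq V] [Nonempty V]
  {G : SimpleGraph V} [DecidableRel G.Adj]

lemma eigenvector_unique (hG : G.Connected) {lam : ℝ} {ψ φ : V → ℝ}
    (hψ : ∀ v, 0 < ψ v) (hψe : G.adjMatrix ℝ *ᵥ ψ = lam • ψ)
    (hφe : G.adjMatrix ℝ *ᵥ φ = lam • φ) : ∃ c : ℝ, ∀ v, φ v = c * ψ v := by
  obtain ⟨u0, -, hu0⟩ := Finset.exists_min_image Finset.univ (fun v => φ v / ψ v)
    Finset.univ_nonempty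
  set c := φ u0 / ψ u0 with hc
  refine ⟨c, fun v => ?_⟩
  set w := fun v => φ v - c * ψ v with hw
  have hwnn : ∀ v, 0 ≤ w v := by
    intro v
    have h1 : c ≤ φ v / ψ v := hu0 v (Finset.mem_univ v)
    have h2 : c * ψ v ≤ φ v := (le_div_iff₀ (hψ v)).mp h1
    simpa [hw] using sub_nonneg.mpr h2
  have hweig : G.adjMatrix ℝ *ᵥ w = lam • w := by
    have : w = φ - c • ψ := by funext x; simp [hw, smul_eq_mul]
    rw [this, Matrix.mulVec_sub, hφe, Matrix.mulVec_smul, hψe, smul_smul, mul_comm, ← smul_smul,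
      smul_sub]
  have h0 : ∀ x, w x = 0 → (G.adjMatrix ℝ *ᵥ w) x ≤ 0 := by
    intro x hx
    rw [hweig]
    simp [hx]
  have hwu0 : w u0 = 0 := by
    simp only [hw, hc]
    rw [div_mul_cancel₀ _ (ne_of_gt (hψ u0)), sub_self]
  have := eq_zero_of_connected hG hwnn h0 hwu0 v
  have : φ v - c * ψ v = 0 := this
  linarith
end Unique

section Decor
variable {E : Type*} [Fintype E] [DecidableEq E] {K β : ℕ} {W : Fin K → Type*}
  [∀ k, Fintype (W k)] [∀ k, DecidableEq (W k)]
  (AE : Matrix E E ℝ) (A : ∀ k, Matrix (W k) (W k) ℝ) (t : ∀ k, W k)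

lemma decorated_mulVec_inl (φ : (E ⊕ E × Σ k : Fin K, Fin β × W k) → ℝ) (u : E) :
    (decoratedMatrix AE A t *ᵥ φ) (Sum.inl u)
      = (AE *ᵥ fun v => φ (Sum.inl v)) u
        + ∑ k : Fin K, ∑ j : Fin β, φ (Sum.inr (u, ⟨k, j, t k⟩)) := by
  have key : ∀ (v : E) (k : Fin K) (s : W k) (x : ℝ),
      (if u = v ∧ s = t k then (1:ℝ) else 0) * x
        = if s = t k then (if u = v then x else 0) else 0 := by
    intro v k s x
    by_cases h1 : u = v <;> by_cases h2 : s = t k <;> simp [h1, h2]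
  simp only [Matrix.mulVec, dotProduct, Fintype.sum_sum_type, decoratedMatrix, Matrix.of_apply,
    Fintype.sum_prod_type, ← Finset.univ_sigma_univ, Finset.sum_sigma]
  congr 1
  simp only [key, Finset.sum_ite_eq', Finset.mem_univ, if_true]
  rw [Finset.sum_comm]
  simp only [Finset.sum_ite_irrel, Finset.sum_const_zero, Finset.sum_ite_eq, Finset.mem_univ, if_true]
  done

lemma decorated_mulVec_inr (φ : (E ⊕ E × Σ k : Fin K, Fin β × W k) → ℝ)
    (u : E) (k : Fin K) (j : Fin β) (s : W k) :
    (decoratedMatrix AE A t *ᵥ φ) (Sum.inr (u, ⟨k, j, s⟩))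
      = (if s = t k then φ (Sum.inl u) else 0)
        + (A k *ᵥ fun s' => φ (Sum.inr (u, ⟨k, j, s'⟩))) s := by
  have key1 : ∀ (v : E) (x : ℝ),
      (if v = u ∧ s = t k then (1:ℝ) else 0) * x
        = if v = u then (if s = t k then x else 0) else 0 := by
    intro v x
    by_cases h1 : v = u <;> by_cases h2 : s = t k <;> simp [h1, h2]
  simp only [Matrix.mulVec, dotProduct, Fintype.sum_sum_type, decoratedMatrix, Matrix.of_apply,
    Fintype.sum_prod_type, ← Finset.univ_sigma_univ, Finset.sum_sigma]
  congr 1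
  · simp only [key1]
    simp [Finset.sum_ite_eq, Finset.mem_univ]
  · -- inner part
    simp only [innerAdj, ite_mul, zero_mul, dite_mul, Finset.sum_ite_irrel, Finset.sum_dite_irrel, Finset.sum_const_zero,
      Finset.sum_ite_eq, Finset.sum_dite_eq', Finset.sum_ite_eq', Finset.mem_univ, if_true]
    done
end Decor


section Herm
variable {E : Type*} [Fintype E] [DecidableEq E] {K β : ℕ} {W : Fin K → Type*}
  [∀ k, Fintype (W k)] [∀ k, DecidableEq (W k)]

lemma real_herm_entry {n : Type*} [Fintype n] {B : Matrix n n ℝ} (hB : B.IsHermitian)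
    (i j : n) : B i j = B j i := by
  have := congrFun (congrFun hB.eq j) i
  rw [Matrix.conjTranspose_apply, star_trivial] at this
  exact this

lemma innerAdj_symm (A : ∀ k, Matrix (W k) (W k) ℝ) (hA : ∀ k, (A k).IsHermitian)
    (a b : Σ k : Fin K, Fin β × W k) : innerAdj A a b = innerAdj A b a := by
  rcases a with ⟨k, j, s⟩; rcases b with ⟨k', j', s'⟩
  simp only [innerAdj]
  by_cases h : k' = k
  · subst h
    by_cases hj : j' = j
    · subst hj
      simp only [dif_pos rfl, if_pos rfl]
      exact real_herm_entry (hA _) _ _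
    · simp [hj, Ne.symm hj]
  · rw [dif_neg h, dif_neg (Ne.symm h)]

lemma decoratedMatrix_isHermitian (AE : Matrix E E ℝ) (A : ∀ k, Matrix (W k) (W k) ℝ)
    (t : ∀ k, W k) (hAE : AE.IsHermitian) (hA : ∀ k, (A k).IsHermitian) :
    (decoratedMatrix (β := β) AE A t).IsHermitian := by
  unfold Matrix.IsHermitian
  ext x y
  rw [Matrix.conjTranspose_apply, star_trivial]
  rcases x with u | ⟨u, ⟨k, j, s⟩⟩ <;> rcases y with v | ⟨v, ⟨k', j', s'⟩⟩
  · exact real_herm_entry hAE v u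
  · simp [decoratedMatrix]
  · simp [decoratedMatrix]
  · simp only [decoratedMatrix, Matrix.of_apply]
    rw [innerAdj_symm A hA]
    by_cases h : u = v
    · subst h; rfl
    · rw [if_neg h, if_neg (Ne.symm h)]
end Herm


/-- in the decorated-graph setting, assuming `λ_G > λ_k` for all `k`, the
vector `ψ_G` given by `ψ_G(u) = ψ_E(u)` on `E` and
`ψ_G(v,k,j,s) = ψ_E(v)·[(λ_G·I - A_k)⁻¹ e_{t_k}](s)` on decoration vertices is
entrywise positive, restricts to `ψ_E` on `E`, and satisfies `M ψ_G = λ_G ψ_G`; in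
particular the restriction to `E` of any eigenvector of `M` for `λ_G` is proportional
to `ψ_E`. -/
theorem decorated_graph_top_eigenvector
    {E : Type*} [Fintype E] [DecidableEq E] [Nonempty E]
    {K β : ℕ} (hK : 1 ≤ K) (hβ : 1 ≤ β)
    {W : Fin K → Type*} [∀ k, Fintype (W k)] [∀ k, DecidableEq (W k)]
    [∀ k, Nonempty (W k)]
    (EG : SimpleGraph E) [DecidableRel EG.Adj] (hEG : EG.Connected)
    (TG : ∀ k, SimpleGraph (W k)) [∀ k, DecidableRel (TG k).Adj]
    (hTG : ∀ k, (TG k).IsTree)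
    (t : ∀ k, W k)
    (AE : Matrix E E ℝ) (hAE : AE = EG.adjMatrix ℝ)
    (A : ∀ k, Matrix (W k) (W k) ℝ) (hA : ∀ k, A k = (TG k).adjMatrix ℝ)
    (M : Matrix (E ⊕ E × Σ k : Fin K, Fin β × W k)
      (E ⊕ E × Σ k : Fin K, Fin β × W k) ℝ)
    (hM : M = decoratedMatrix AE A t)
    (lamE : ℝ) (hlamE : lamE = sSup (spectrum ℝ AE))
    (ψE : E → ℝ) (hψEpos : ∀ u, 0 < ψE u) (hψEeig : AE *ᵥ ψE = lamE • ψE)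
    (lamG : ℝ) (hlamG : lamG = sSup (spectrum ℝ M))
    (lamT : Fin K → ℝ) (hlamT : ∀ k, lamT k = sSup (spectrum ℝ (A k)))
    (hgap : ∀ k, lamT k < lamG)
    (ψG : (E ⊕ E × Σ k : Fin K, Fin β × W k) → ℝ)
    (hψG : ψG = Sum.elim ψE
      (fun p => ψE p.1 *
        (((lamG • (1 : Matrix (W p.2.1) (W p.2.1) ℝ) - A p.2.1)⁻¹ *ᵥ
          Pi.single (t p.2.1) 1) p.2.2.2))) :
    (∀ x, 0 < ψG x) ∧
    (∀ u : E, ψG (Sum.inl u) = ψE u) ∧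
    M *ᵥ ψG = lamG • ψG ∧
    (∀ φ : (E ⊕ E × Σ k : Fin K, Fin β × W k) → ℝ,
      M *ᵥ φ = lamG • φ → ∃ c : ℝ, ∀ u : E, φ (Sum.inl u) = c * ψE u) := by
  classical
  haveI : Nonempty (E ⊕ E × Σ k : Fin K, Fin β × W k) := ⟨Sum.inl (Classical.arbitrary E)⟩
  set g : ∀ k : Fin K, W k → ℝ :=
    fun k => ((lamG • (1 : Matrix (W k) (W k) ℝ) - A k)⁻¹ *ᵥ Pi.single (t k) 1) with hgdef
  have hψGinl : ∀ u, ψG (Sum.inl u) = ψE u := by intro u; rw [hψG]; rfl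
  have hψGinr : ∀ (u : E) (k : Fin K) (j : Fin β) (s : W k),
      ψG (Sum.inr (u, ⟨k, j, s⟩)) = ψE u * g k s := by
    intro u k j s; rw [hψG]; rfl
  have hAEH : AE.IsHermitian := by rw [hAE]; exact adj_isHermitian EG
  have hAH : ∀ k, (A k).IsHermitian := fun k => by rw [hA k]; exact adj_isHermitian (TG k)
  have hMH : M.IsHermitian := by rw [hM]; exact decoratedMatrix_isHermitian _ _ _ hAEH hAH
  have hspecA : ∀ k, ∀ μ ∈ spectrum ℝ (A k), μ < lamG := by
    intro k μ hμ
    have h1 : μ ≤ lamT k := by rw [hlamT k]; exact le_sSup_spec (hAH k) hμ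
    exact lt_of_le_of_lt h1 (hgap k)
  have hU : ∀ k, IsUnit (lamG • (1 : Matrix (W k) (W k) ℝ) - A k) :=
    fun k => shift_isUnit (hAH k) (hspecA k)
  have hUdet : ∀ k, IsUnit (lamG • (1 : Matrix (W k) (W k) ℝ) - A k).det :=
    fun k => (Matrix.isUnit_iff_isUnit_det _).mp (hU k)
  have hBg : ∀ k, (lamG • (1 : Matrix (W k) (W k) ℝ) - A k) *ᵥ g k = Pi.single (t k) 1 := by
    intro k
    rw [hgdef]
    rw [Matrix.mulVec_mulVec, Matrix.mul_nonsing_inv _ (hUdet k), Matrix.one_mulVec]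
  have heqg : ∀ k s, lamG * g k s - (A k *ᵥ g k) s = (Pi.single (t k) 1 : W k → ℝ) s := by
    intro k s
    have := congrFun (hBg k) s
    simpa [Matrix.sub_mulVec, Matrix.smul_mulVec, Matrix.one_mulVec] using this
  have hinj : ∀ k (x : W k → ℝ),
      (lamG • (1 : Matrix (W k) (W k) ℝ) - A k) *ᵥ x = 0 → x = 0 := by
    intro k x hx
    have h2 : (lamG • (1 : Matrix (W k) (W k) ℝ) - A k)⁻¹ *ᵥ
        ((lamG • (1 : Matrix (W k) (W k) ℝ) - A k) *ᵥ x) = x := by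
      rw [Matrix.mulVec_mulVec, Matrix.nonsing_inv_mul _ (hUdet k), Matrix.one_mulVec]
    rw [hx, Matrix.mulVec_zero] at h2
    exact h2.symm
  have hlamG0 : 0 < lamG := by
    have k0 : Fin K := ⟨0, hK⟩
    have s0 : W k0 := Classical.arbitrary _
    have hdiag : (A k0) s0 s0 = 0 := by rw [hA k0]; simp
    have h1 := diag_le_sSup_spec (hAH k0) s0
    rw [hdiag, ← hlamT k0] at h1
    exact lt_of_le_of_lt h1 (hgap k0)
  have hgpos : ∀ k s, 0 < g k s := by
    intro k s
    have h1 : ∀ μ ∈ spectrum ℝ ((TG k).adjMatrix ℝ), μ < lamG := by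
      rw [← hA k]; exact hspecA k
    have := resolvent_pos (TG k) (hTG k).isConnected (t k) h1 hlamG0 s
    show 0 < ((lamG • (1 : Matrix (W k) (W k) ℝ) - A k)⁻¹ *ᵥ Pi.single (t k) 1) s
    rw [hA k]
    exact this
  -- block solve
  have hblock : ∀ φ : (E ⊕ E × Σ k : Fin K, Fin β × W k) → ℝ, M *ᵥ φ = lamG • φ →
      ∀ u k j s, φ (Sum.inr (u, ⟨k, j, s⟩)) = φ (Sum.inl u) * g k s := by
    intro φ hφ u k j s
    set h : W k → ℝ := fun s' => φ (Sum.inr (u, ⟨k, j, s'⟩)) with hh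
    have hrow : ∀ s' : W k,
        (if s' = t k then φ (Sum.inl u) else 0) + (A k *ᵥ h) s' = lamG * h s' := by
      intro s'
      have e1 := congrFun hφ (Sum.inr (u, ⟨k, j, s'⟩))
      rw [hM, decorated_mulVec_inr] at e1
      simpa using e1
    have hBh : (lamG • (1 : Matrix (W k) (W k) ℝ) - A k) *ᵥ h
        = φ (Sum.inl u) • (Pi.single (t k) 1 : W k → ℝ) := by
      funext s'
      rw [Matrix.sub_mulVec, Matrix.smul_mulVec, Matrix.one_mulVec]
      have e2 := hrow s'
      simp only [Pi.sub_apply, Pi.smul_apply, smul_eq_mul, Pi.single_apply]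
      by_cases hs : s' = t k <;> simp only [hs, if_true, if_false] <;> simp [hs] at e2 <;> linarith
    have hBh2 : (lamG • (1 : Matrix (W k) (W k) ℝ) - A k) *ᵥ (h - φ (Sum.inl u) • g k) = 0 := by
      rw [Matrix.mulVec_sub, hBh, Matrix.mulVec_smul, hBg k, sub_self]
    have h3 := congrFun (hinj k _ hBh2) s
    simp only [Pi.sub_apply, Pi.smul_apply, smul_eq_mul, Pi.zero_apply, sub_eq_zero] at h3
    exact h3
  -- effective eigenvalue equation on E
  have heff : ∀ φ : (E ⊕ E × Σ k : Fin K, Fin β × W k) → ℝ, M *ᵥ φ = lamG • φ →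
      AE *ᵥ (fun v => φ (Sum.inl v))
        = (lamG - (β : ℝ) * ∑ k, g k (t k)) • (fun v => φ (Sum.inl v)) := by
    intro φ hφ
    funext u
    have e1 := congrFun hφ (Sum.inl u)
    rw [hM, decorated_mulVec_inl] at e1
    have e2 : ∀ (k : Fin K) (j : Fin β),
        φ (Sum.inr (u, ⟨k, j, t k⟩)) = φ (Sum.inl u) * g k (t k) :=
      fun k j => hblock φ hφ u k j (t k)
    simp only [e2, Pi.smul_apply, smul_eq_mul] at e1 ⊢
    rw [Finset.sum_congr rfl (fun (k : Fin K) _ => Finset.sum_const (φ (Sum.inl u) * g k (t k)))]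
      at e1
    simp only [Finset.card_univ, Fintype.card_fin, nsmul_eq_mul] at e1
    have e3 : ∑ k : Fin K, (β : ℝ) * (φ (Sum.inl u) * g k (t k))
        = (β : ℝ) * (∑ k, g k (t k)) * φ (Sum.inl u) := by
      rw [Finset.mul_sum, Finset.sum_mul]
      exact Finset.sum_congr rfl fun k _ => by ring
    rw [e3] at e1
    linear_combination e1
  -- the inner rows of the eigen-equation for ψG hold exactly
  have hψGrow : ∀ (u : E) (k : Fin K) (j : Fin β) (s : W k),
      (M *ᵥ ψG) (Sum.inr (u, ⟨k, j, s⟩)) = lamG * ψG (Sum.inr (u, ⟨k, j, s⟩)) := by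
    intro u k j s
    rw [hM, decorated_mulVec_inr]
    have hv : (fun s' => ψG (Sum.inr (u, ⟨k, j, s'⟩))) = ψE u • g k := by
      funext s'; rw [hψGinr]; simp [smul_eq_mul]
    rw [hv, Matrix.mulVec_smul, hψGinr, hψGinl]
    have e1 := heqg k s
    simp only [Pi.smul_apply, smul_eq_mul, Pi.single_apply] at e1 ⊢
    by_cases hs : s = t k <;> simp only [hs, if_true, if_false] <;> simp [hs] at e1 <;>
      linear_combination (-(ψE u)) * e1
  have hψGrowl : ∀ u : E,
      (M *ᵥ ψG) (Sum.inl u) = (lamE + (β : ℝ) * ∑ k, g k (t k)) * ψE u := by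
    intro u
    rw [hM, decorated_mulVec_inl]
    have hφE : (fun v => ψG (Sum.inl v)) = ψE := funext hψGinl
    rw [hφE, hψEeig]
    simp only [hψGinr, Pi.smul_apply, smul_eq_mul]
    have hsum2 : ∑ k : Fin K, ∑ j : Fin β, ψE u * g k (t k)
        = (β : ℝ) * (∑ k, g k (t k)) * ψE u := by
      simp only [Finset.sum_const, Finset.card_univ, Fintype.card_fin, nsmul_eq_mul]
      rw [Finset.mul_sum, Finset.sum_mul]
      exact Finset.sum_congr rfl fun k _ => by ring
    rw [hsum2]
    ring
  -- the consistency identity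
  have hsum : lamE + (β : ℝ) * ∑ k, g k (t k) = lamG := by
    have hmem : lamG ∈ spectrum ℝ M := by rw [hlamG]; exact sSup_spec_mem hMH
    obtain ⟨φ0, hφ0ne, hφ0⟩ := (mem_spec_iff_eigenvector M lamG).mp hmem
    set μ := lamG - (β : ℝ) * ∑ k, g k (t k) with hμ
    have hφ0E := heff φ0 hφ0
    have hφ0Ene : (fun v => φ0 (Sum.inl v)) ≠ 0 := by
      intro h0
      apply hφ0ne
      funext x
      rcases x with u | ⟨u, ⟨k, j, s⟩⟩
      · exact congrFun h0 u
      · rw [hblock φ0 hφ0 u k j s, show φ0 (Sum.inl u) = 0 from congrFun h0 u, zero_mul]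
        rfl
    have hμmem : μ ∈ spectrum ℝ AE :=
      (mem_spec_iff_eigenvector AE μ).mpr ⟨_, hφ0Ene, hφ0E⟩
    have hμle : μ ≤ lamE := by rw [hlamE]; exact le_sSup_spec hAEH hμmem
    have hPSD : (lamG • (1 : Matrix (E ⊕ E × Σ k : Fin K, Fin β × W k)
        (E ⊕ E × Σ k : Fin K, Fin β × W k) ℝ) - M).PosSemidef :=
      shift_posSemidef hMH (fun ν hν => by rw [hlamG]; exact le_sSup_spec hMH hν)
    have hMψG : M *ᵥ ψG = lamG • ψG + Sum.elim ((lamE - μ) • ψE) 0 := by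
      funext x
      rcases x with u | ⟨u, ⟨k, j, s⟩⟩
      · simp only [Pi.add_apply, Pi.smul_apply, smul_eq_mul, Sum.elim_inl]
        rw [hψGrowl u, hψGinl, hμ]
        ring
      · simp only [Pi.add_apply, Pi.smul_apply, smul_eq_mul, Sum.elim_inr, Pi.zero_apply, add_zero]
        exact hψGrow u k j s
    have hcomp : star ψG ⬝ᵥ ((lamG • (1 : Matrix (E ⊕ E × Σ k : Fin K, Fin β × W k)
        (E ⊕ E × Σ k : Fin K, Fin β × W k) ℝ) - M) *ᵥ ψG)
        = -((lamE - μ) * ∑ u : E, ψE u * ψE u) := by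
      have hstar : star ψG = ψG := funext fun x => star_trivial _
      rw [hstar, Matrix.sub_mulVec, Matrix.smul_mulVec, Matrix.one_mulVec, hMψG]
      have e0 : lamG • ψG - (lamG • ψG + Sum.elim ((lamE - μ) • ψE) 0)
          = -(Sum.elim ((lamE - μ) • ψE) 0) := by
        funext x; simp
      rw [e0, dotProduct_neg]
      congr 1
      rw [dotProduct, Fintype.sum_sum_type]
      simp only [Sum.elim_inl, Sum.elim_inr, Pi.smul_apply, smul_eq_mul, Pi.zero_apply,
        mul_zero, Finset.sum_const_zero, add_zero, hψGinl]
      rw [Finset.mul_sum]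
      exact Finset.sum_congr rfl fun u _ => by ring
    have hSpos : 0 < ∑ u : E, ψE u * ψE u :=
      Finset.sum_pos (fun u _ => mul_pos (hψEpos u) (hψEpos u)) Finset.univ_nonempty
    have h0le := hPSD.dotProduct_mulVec_nonneg ψG
    rw [hcomp] at h0le
    have h1 : lamE - μ ≤ 0 := by nlinarith
    have h2 : μ = lamE := le_antisymm hμle (by linarith)
    rw [hμ] at h2
    linarith
  refine ⟨?_, hψGinl, ?_, ?_⟩
  · intro x
    rcases x with u | ⟨u, ⟨k, j, s⟩⟩
    · rw [hψGinl]; exact hψEpos u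
    · rw [hψGinr]; exact mul_pos (hψEpos u) (hgpos k s)
  · funext x
    rcases x with u | ⟨u, ⟨k, j, s⟩⟩
    · rw [Pi.smul_apply, smul_eq_mul, hψGrowl u, hsum, hψGinl]
    · rw [Pi.smul_apply, smul_eq_mul, hψGrow]
  · intro φ hφ
    have h1 := heff φ hφ
    have h2 : lamG - (β : ℝ) * ∑ k, g k (t k) = lamE := by linarith
    rw [h2] at h1
    have hψe' : EG.adjMatrix ℝ *ᵥ ψE = lamE • ψE := by rw [← hAE]; exact hψEeig
    have hφe' : EG.adjMatrix ℝ *ᵥ (fun v => φ (Sum.inl v)) = lamE • (fun v => φ (Sum.inl v)) := by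
      rw [← hAE]; exact h1
    obtain ⟨c, hc⟩ := eigenvector_unique hEG hψEpos hψe' hφe'
    exact ⟨c, hc⟩
end

section
/- Let T be a finite tree (a connected acyclic simple graph on a finite nonempty vertex set) with adjacency matrix A, distinguished vertex t, and largest adjacency eigenvalue λ_T. Let λ > λ_T be real, set α := ([(λI − A)⁻¹]_{t,t})⁻¹ and ψ := α·(λI − A)⁻¹ e_t. Then λ·‖ψ‖² − ψᵀ A ψ = α, and consequently ‖ψ‖² ≤ α / (λ − λ_T), where ‖ψ‖² denotes the sum of the squares of the entries of ψ. -/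
open Matrix
open scoped Pointwise

lemma aux_posSemidef_smul_one_sub {n : Type*} [Fintype n] [DecidableEq n]
    (A : Matrix n n ℝ) (hA : A.IsHermitian) (c : ℝ)
    (hc : ∀ μ ∈ spectrum ℝ A, μ ≤ c) :
    (c • (1 : Matrix n n ℝ) - A).PosSemidef := by
  have hsm : (c • (1 : Matrix n n ℝ)).IsHermitian := by
    simp [Matrix.IsHermitian]
  have hBH : (c • (1 : Matrix n n ℝ) - A).IsHermitian := hsm.sub hA
  refine hBH.posSemidef_iff_eigenvalues_nonneg.mpr fun i => show (0:ℝ) ≤ _ from ?_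
  have h1 : hBH.eigenvalues i ∈ spectrum ℝ (c • (1 : Matrix n n ℝ) - A) :=
    hBH.eigenvalues_mem_spectrum_real i
  have h1' : hBH.eigenvalues i ∈ ({c} : Set ℝ) - spectrum ℝ A := by
    rw [spectrum.singleton_sub_eq, Algebra.algebraMap_eq_smul_one]
    exact h1
  obtain ⟨a, ha, b, hb, hab⟩ := Set.mem_sub.mp h1'

  rw [Set.mem_singleton_iff] at ha
  subst ha
  rw [← hab]
  linarith [hc b hb]

lemma aux_quad_bound {n : Type*} [Fintype n] [DecidableEq n]
    (A : Matrix n n ℝ) (hA : A.IsHermitian) (c : ℝ)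
    (hc : ∀ μ ∈ spectrum ℝ A, μ ≤ c) (x : n → ℝ) :
    x ⬝ᵥ (A *ᵥ x) ≤ c * (x ⬝ᵥ x) := by
  have h := (aux_posSemidef_smul_one_sub A hA c hc).dotProduct_mulVec_nonneg x
  rw [star_trivial, Matrix.sub_mulVec, dotProduct_sub, Matrix.smul_mulVec,
    Matrix.one_mulVec, dotProduct_smul, smul_eq_mul] at h
  linarith

/-- for a finite tree `T` with adjacency matrix `A`, distinguished vertex
`t`, largest eigenvalue `λ_T`, and `λ > λ_T`, setting
`α := ([(λI - A)⁻¹]_{t,t})⁻¹` and `ψ := α·(λI - A)⁻¹ e_t`, one has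
`λ·‖ψ‖² - ψᵀ A ψ = α` and consequently `‖ψ‖² ≤ α / (λ - λ_T)`. -/
theorem selfLoopTree_norm_bound
    {V : Type*} [Fintype V] [DecidableEq V] [Nonempty V]
    (T : SimpleGraph V) [DecidableRel T.Adj] (hT : T.IsTree) (t : V)
    (A : Matrix V V ℝ) (hA : A = T.adjMatrix ℝ)
    (lamT : ℝ) (hlamT : lamT = sSup (spectrum ℝ A))
    (lam : ℝ) (hlam : lamT < lam)
    (α : ℝ) (hα : α = ((lam • (1 : Matrix V V ℝ) - A)⁻¹ t t)⁻¹)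
    (ψ : V → ℝ) (hψ : ψ = α • ((lam • (1 : Matrix V V ℝ) - A)⁻¹ *ᵥ Pi.single t 1)) :
    lam * (∑ v, ψ v ^ 2) - ψ ⬝ᵥ (A *ᵥ ψ) = α ∧
    (∑ v, ψ v ^ 2) ≤ α / (lam - lamT) := by
  have hAH : A.IsHermitian := by
    rw [hA]
    ext i j
    simp [Matrix.conjTranspose_apply, SimpleGraph.adj_comm]
  -- every element of the spectrum is ≤ lamT
  have hspec : ∀ μ ∈ spectrum ℝ A, μ ≤ lamT := by
    intro μ hμ
    rw [hlamT]
    exact le_csSup (Matrix.finite_spectrum A).bddAbove hμ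
  have hspec' : ∀ μ ∈ spectrum ℝ A, μ ≤ lam := fun μ hμ => (hspec μ hμ).trans hlam.le
  set M : Matrix V V ℝ := lam • (1 : Matrix V V ℝ) - A with hM
  -- M is positive definite
  have hMpd : M.PosDef := by
    refine .of_dotProduct_mulVec_pos ((by simp [Matrix.IsHermitian] : (lam • (1 : Matrix V V ℝ)).IsHermitian).sub hAH)
      fun x hx => ?_
    have h1 : x ⬝ᵥ (A *ᵥ x) ≤ lamT * (x ⬝ᵥ x) := aux_quad_bound A hAH lamT hspec x
    have h2 : 0 < x ⬝ᵥ x := by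
      obtain ⟨v, hv⟩ := Function.ne_iff.mp hx
      have hv' : x v ≠ 0 := by simpa using hv
      have := Finset.sum_pos' (fun w _ => mul_self_nonneg (x w))
        ⟨v, Finset.mem_univ v, mul_self_pos.mpr hv'⟩
      simpa [dotProduct] using this
    rw [star_trivial, hM, Matrix.sub_mulVec, dotProduct_sub, Matrix.smul_mulVec,
      Matrix.one_mulVec, dotProduct_smul, smul_eq_mul]
    nlinarith
  have hMinv : M * M⁻¹ = 1 :=
    Matrix.mul_nonsing_inv M ((Matrix.isUnit_iff_isUnit_det M).mp hMpd.isUnit)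
  -- compute M *ᵥ ψ
  have hMψ : M *ᵥ ψ = α • (Pi.single t 1 : V → ℝ) := by
    rw [hψ, Matrix.mulVec_smul, Matrix.mulVec_mulVec, hMinv, Matrix.one_mulVec]
  have hψt : ψ t = α * (M⁻¹ t t) := by
    rw [hψ]
    simp [Matrix.mulVec_single]
  have hαψt : α * ψ t = α := by
    rcases eq_or_ne (M⁻¹ t t) 0 with h0 | h0
    · rw [hψt, h0, hα, h0]
      simp
    · rw [hψt, hα, inv_mul_cancel₀ h0, mul_one]
  -- first claim
  have hfirst : lam * (∑ v, ψ v ^ 2) - ψ ⬝ᵥ (A *ᵥ ψ) = α := by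
    have e1 : ψ ⬝ᵥ (M *ᵥ ψ) = α * ψ t := by
      rw [hMψ, dotProduct_smul, smul_eq_mul]
      congr 1
      simp [dotProduct, Pi.single_apply]
    have e2 : ψ ⬝ᵥ (M *ᵥ ψ) = lam * (∑ v, ψ v ^ 2) - ψ ⬝ᵥ (A *ᵥ ψ) := by
      rw [hM, Matrix.sub_mulVec, dotProduct_sub, Matrix.smul_mulVec,
        Matrix.one_mulVec, dotProduct_smul, smul_eq_mul]
      congr 2
      simp [dotProduct, pow_two]
    rw [← e2, e1, hαψt]
  refine ⟨hfirst, ?_⟩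
  -- second claim
  have hb : ψ ⬝ᵥ (A *ᵥ ψ) ≤ lamT * (∑ v, ψ v ^ 2) := by
    have := aux_quad_bound A hAH lamT hspec ψ
    calc ψ ⬝ᵥ (A *ᵥ ψ) ≤ lamT * (ψ ⬝ᵥ ψ) := this
    _ = lamT * (∑ v, ψ v ^ 2) := by congr 1; simp [dotProduct, pow_two]
  rw [le_div_iff₀ (by linarith)]
  nlinarith
end

section
/- Let A be a real symmetric matrix with nonnegative entries, indexed by a finite nonempty type. If x is an eigenvector of A with eigenvalue μ all of whose entries are strictly positive, then μ is the largest eigenvalue of A. -/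
open Matrix

/-- Perron–Frobenius step: if a real symmetric entrywise-nonnegative
matrix `A` has an eigenvector `x` with eigenvalue `μ` all of whose entries are strictly
positive, then `μ` is the largest eigenvalue of `A`. -/
theorem eigenvalue_of_positive_eigenvector_is_max
    {V : Type*} [Fintype V] [DecidableEq V] [Nonempty V]
    (A : Matrix V V ℝ) (hA : A.IsHermitian)
    (hnonneg : ∀ i j, 0 ≤ A i j)
    (μ : ℝ) (x : V → ℝ) (hx : ∀ i, 0 < x i) (heig : A *ᵥ x = μ • x) :
    μ ∈ spectrum ℝ A ∧ ∀ ν ∈ spectrum ℝ A, ν ≤ μ := by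
  have hx0 : x ≠ 0 := fun h => (hx (Classical.arbitrary V)).ne' (congrFun h _)
  have hsym : Aᵀ = A := by
    ext i j
    have := congrFun (congrFun hA i) j
    simpa using this
  have hspec : spectrum ℝ (Matrix.toLin' A) = spectrum ℝ A :=
    AlgEquiv.spectrum_eq Matrix.toLinAlgEquiv' A
  constructor
  · rw [← hspec, ← Module.End.hasEigenvalue_iff_mem_spectrum]
    apply Module.End.hasEigenvalue_of_hasEigenvector (x := x)
    refine ⟨Module.End.mem_eigenspace_iff.mpr ?_, hx0⟩
    rw [Matrix.toLin'_apply, heig]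
  · intro ν hν
    have hν' : Module.End.HasEigenvalue (Matrix.toLin' A) ν := by
      rw [Module.End.hasEigenvalue_iff_mem_spectrum, hspec]; exact hν
    obtain ⟨y, hy, hy0⟩ := hν'.exists_hasEigenvector
    have hAy : A *ᵥ y = ν • y := by
      rw [← Matrix.toLin'_apply]; exact Module.End.mem_eigenspace_iff.mp hy
    set z : V → ℝ := fun i => |y i| with hz_def
    have hz : ∀ i, |ν| * z i ≤ (A *ᵥ z) i := by
      intro i
      have h1 : |ν| * z i = |(A *ᵥ y) i| := by
        rw [hAy]; simp [abs_mul, hz_def]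
      rw [h1]
      show |(A *ᵥ y) i| ≤ (A *ᵥ z) i
      simp only [Matrix.mulVec, dotProduct]
      refine (Finset.abs_sum_le_sum_abs _ _).trans ?_
      apply Finset.sum_le_sum
      intro j _
      rw [abs_mul, abs_of_nonneg (hnonneg i j)]
    have hdot : 0 < ∑ i, x i * z i := by
      obtain ⟨i, hi⟩ : ∃ i, y i ≠ 0 := by
        by_contra h; push_neg at h; exact hy0 (funext h)
      exact Finset.sum_pos' (fun i _ => mul_nonneg (hx i).le (abs_nonneg _))
        ⟨i, Finset.mem_univ i, mul_pos (hx i) (abs_pos.mpr hi)⟩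
    have hle : |ν| * (∑ i, x i * z i) ≤ μ * (∑ i, x i * z i) := by
      have h1 : ∑ i, x i * (|ν| * z i) ≤ ∑ i, x i * (A *ᵥ z) i :=
        Finset.sum_le_sum fun i _ => mul_le_mul_of_nonneg_left (hz i) (hx i).le
      have h2 : ∑ i, x i * (A *ᵥ z) i = μ * ∑ i, x i * z i := by
        have key : x ⬝ᵥ (A *ᵥ z) = (A *ᵥ x) ⬝ᵥ z := by
          rw [Matrix.dotProduct_mulVec, ← Matrix.mulVec_transpose, hsym]
        have : x ⬝ᵥ (A *ᵥ z) = μ * (x ⬝ᵥ z) := by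
          rw [key, heig, smul_dotProduct, smul_eq_mul]
        simpa [dotProduct] using this
      calc |ν| * (∑ i, x i * z i) = ∑ i, x i * (|ν| * z i) := by
            rw [Finset.mul_sum]; congr 1; ext i; ring
        _ ≤ ∑ i, x i * (A *ᵥ z) i := h1
        _ = μ * ∑ i, x i * z i := h2
    have : |ν| ≤ μ := le_of_mul_le_mul_right (by linarith [hle]) hdot
    exact (le_abs_self ν).trans this
end
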